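/- arXiv:2312.15531 — 9 statements merged into one kernel-verified Lean document; each statement's English description precedes it below -/
import Mathlib

section
/- Let t0 > 0, let φ : [t0,∞) → ℝ be of class C² and ψ : [t0,∞) → ℝ be of class C¹. Assume φ''(t) ≥ 0 for every t ≥ t0, and that there exist positive real numbers φ0 and Ψ0 such that |φ'(t)| ≥ φ0 and |ψ'(t)| ≤ Ψ0/t for every t ≥ t0. Then for every t ≥ t0 one has |∫_{t0}^t cos(φ(s))·sin(ψ(s))/s ds| ≤ (4 + Ψ0)/(φ0·t0). -/
/-!
Integrate by parts against `sin ∘ φ`, whose derivative `cos φ · φ'` carries the oscillation: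
`cos φ · sin ψ / s = u · (sin ∘ φ)'` with `u = sin ψ · s⁻¹ · φ'⁻¹`. Each boundary term is at most
`1 / (φ0 t0)`. In `u'`, the parts coming from `ψ'` and from `s⁻¹` are at most `(1 + Ψ0) / (φ0 s²)`,
whose integral is at most `(1 + Ψ0) / (φ0 t0)`. The part coming from `φ'⁻¹` is at most
`φ'' / (t0 φ'²)` because `φ'' ≥ 0`; it integrates to `(1/φ'(t0) - 1/φ'(t)) / t0`, and since `φ'`
never vanishes it keeps its sign, so this is at most `1 / (φ0 t0)`.
-/

open Real Set Filter MeasureTheory intervalIntegral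

theorem mul_pos_of_continuousOn_of_ne_zero {f : ℝ → ℝ} {a b : ℝ} (hab : a ≤ b)
    (hf : ContinuousOn f (Icc a b)) (hf0 : ∀ x ∈ Icc a b, f x ≠ 0) : 0 < f a * f b := by
  by_contra! h
  have h0 : (0 : ℝ) ∈ uIcc (f a) (f b) := by
    rcases mul_nonpos_iff.1 h with ⟨ha, hb⟩ | ⟨ha, hb⟩
    · exact mem_uIcc.2 (Or.inr ⟨hb, ha⟩)
    · exact mem_uIcc.2 (Or.inl ⟨ha, hb⟩)
  rw [← uIcc_of_le hab] at hf hf0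
  obtain ⟨c, hc, hfc⟩ := intermediate_value_uIcc hf h0
  exact hf0 c hc hfc

theorem abs_inv_sub_inv_le_of_mul_pos {x y c : ℝ} (hc : 0 < c) (hxy : 0 < x * y)
    (hx : c ≤ |x|) (hy : c ≤ |y|) : |x⁻¹ - y⁻¹| ≤ c⁻¹ := by
  have of_pos : ∀ {x y : ℝ}, 0 < x → 0 < y → c ≤ x → c ≤ y → |x⁻¹ - y⁻¹| ≤ c⁻¹ :=
    fun hx hy hcx hcy => abs_sub_le_of_nonneg_of_le (inv_nonneg.2 hx.le) (inv_anti₀ hc hcx)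
      (inv_nonneg.2 hy.le) (inv_anti₀ hc hcy)
  rcases pos_and_pos_or_neg_and_neg_of_mul_pos hxy with ⟨hx0, hy0⟩ | ⟨hx0, hy0⟩
  · rw [abs_of_pos hx0] at hx
    rw [abs_of_pos hy0] at hy
    exact of_pos hx0 hy0 hx hy
  · rw [abs_of_neg hx0] at hx
    rw [abs_of_neg hy0] at hy
    simpa only [inv_neg, neg_sub_neg, abs_sub_comm] using
      of_pos (neg_pos.2 hx0) (neg_pos.2 hy0) hx hy

section DerivDivSq

variable {f f' : ℝ → ℝ} {a b : ℝ}

theorem intervalIntegrable_deriv_div_sq (hf : ∀ x ∈ uIcc a b, HasDerivAt f (f' x) x)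
    (hf' : ContinuousOn f' (uIcc a b)) (hf0 : ∀ x ∈ uIcc a b, f x ≠ 0) :
    IntervalIntegrable (fun x => f' x / f x ^ 2) volume a b :=
  (hf'.div ((HasDerivAt.continuousOn hf).pow 2)
    fun x hx => pow_ne_zero 2 (hf0 x hx)).intervalIntegrable

theorem integral_deriv_div_sq (hf : ∀ x ∈ uIcc a b, HasDerivAt f (f' x) x)
    (hf' : ContinuousOn f' (uIcc a b)) (hf0 : ∀ x ∈ uIcc a b, f x ≠ 0) :
    ∫ x in a..b, f' x / f x ^ 2 = (f a)⁻¹ - (f b)⁻¹ := by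
  rw [integral_eq_sub_of_hasDerivAt (f := fun x => -(f x)⁻¹)
    (fun x hx => ((hf x hx).inv (hf0 x hx)).fun_neg.congr_deriv (by ring))
    (intervalIntegrable_deriv_div_sq hf hf' hf0)]
  ring

end DerivDivSq

theorem abs_integral_mul_deriv_le {a b : ℝ} (hab : a ≤ b) {u u' v v' U : ℝ → ℝ}
    (hu : ∀ x ∈ Icc a b, HasDerivAt u (u' x) x) (hv : ∀ x ∈ Icc a b, HasDerivAt v (v' x) x)
    (hu' : IntervalIntegrable u' volume a b) (hv' : IntervalIntegrable v' volume a b)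
    (hv1 : ∀ x ∈ Icc a b, |v x| ≤ 1) (hU : ∀ x ∈ Icc a b, |u' x| ≤ U x)
    (hUi : IntervalIntegrable U volume a b) :
    |∫ x in a..b, u x * v' x| ≤ |u a| + |u b| + ∫ x in a..b, U x := by
  rw [← uIcc_of_le hab] at hu hv
  rw [integral_mul_deriv_eq_deriv_mul hu hv hu' hv']
  have hend : ∀ x ∈ uIcc a b, |u x * v x| ≤ |u x| := fun x hx => by
    rw [abs_mul]
    exact mul_le_of_le_one_right (abs_nonneg _) (hv1 x (uIcc_of_le hab ▸ hx))
  have hint : |∫ x in a..b, u' x * v x| ≤ ∫ x in a..b, U x := by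
    rw [← Real.norm_eq_abs]
    refine norm_integral_le_of_norm_le hab (ae_of_all _ fun x hx => ?_) hUi
    rw [norm_mul, Real.norm_eq_abs, Real.norm_eq_abs]
    exact (mul_le_of_le_one_right (abs_nonneg _) (hv1 x (Ioc_subset_Icc_self hx))).trans
      (hU x (Ioc_subset_Icc_self hx))
  have htri₁ := abs_sub (u b * v b - u a * v a) (∫ x in a..b, u' x * v x)
  have htri₂ := abs_sub (u b * v b) (u a * v a)
  linarith [hend a left_mem_uIcc, hend b right_mem_uIcc]

theorem hasDerivAt_sin_mul_inv_mul_inv {ψ g : ℝ → ℝ} {ψ' g' s : ℝ} (hs : s ≠ 0) (hg : g s ≠ 0)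
    (hψ : HasDerivAt ψ ψ' s) (hgd : HasDerivAt g g' s) :
    HasDerivAt (fun x => sin (ψ x) * x⁻¹ * (g x)⁻¹)
      (cos (ψ s) * ψ' * s⁻¹ * (g s)⁻¹ - sin (ψ s) * (s ^ 2)⁻¹ * (g s)⁻¹
        - sin (ψ s) * s⁻¹ * (g' / g s ^ 2)) s :=
  ((hψ.sin.fun_mul (hasDerivAt_inv hs)).fun_mul (hgd.inv hg)).congr_deriv
    (by rw [Pi.inv_apply]; ring)

theorem abs_sin_mul_inv_mul_inv_le {θ s q t0 φ0 : ℝ} (ht0 : 0 < t0) (hs : t0 ≤ s) (hφ0 : 0 < φ0)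
    (hq : φ0 ≤ |q|) : |sin θ * s⁻¹ * q⁻¹| ≤ (φ0 * t0)⁻¹ := by
  have hs0 : 0 < s := ht0.trans_le hs
  have hsin := abs_sin_le_one θ
  rw [abs_mul, abs_mul, abs_inv, abs_inv, abs_of_pos hs0, mul_inv, mul_comm φ0⁻¹]
  calc |sin θ| * s⁻¹ * |q|⁻¹ ≤ 1 * t0⁻¹ * φ0⁻¹ := by gcongr
    _ = t0⁻¹ * φ0⁻¹ := by rw [one_mul]

theorem abs_deriv_sin_mul_inv_mul_inv_le {θ p q r s t0 φ0 Ψ0 : ℝ} (ht0 : 0 < t0) (hs : t0 ≤ s)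
    (hφ0 : 0 < φ0) (hq : φ0 ≤ |q|) (hp : |p| ≤ Ψ0 / s) (hr : 0 ≤ r) :
    |cos θ * p * s⁻¹ * q⁻¹ - sin θ * (s ^ 2)⁻¹ * q⁻¹ - sin θ * s⁻¹ * (r / q ^ 2)|
      ≤ (1 + Ψ0) / φ0 * (1 / s ^ 2) + t0⁻¹ * (r / q ^ 2) := by
  have hs0 : 0 < s := ht0.trans_le hs
  have hΨ0 : 0 ≤ Ψ0 := by
    have hnonneg := (abs_nonneg p).trans hp
    rwa [le_div_iff₀ hs0, zero_mul] at hnonneg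
  have hsin := abs_sin_le_one θ
  have hcos := abs_cos_le_one θ
  have hA : |cos θ * p * s⁻¹ * q⁻¹| ≤ Ψ0 / s * s⁻¹ * φ0⁻¹ := by
    rw [abs_mul, abs_mul, abs_mul, abs_inv, abs_inv, abs_of_pos hs0]
    calc |cos θ| * |p| * s⁻¹ * |q|⁻¹ ≤ 1 * (Ψ0 / s) * s⁻¹ * φ0⁻¹ := by gcongr
      _ = Ψ0 / s * s⁻¹ * φ0⁻¹ := by rw [one_mul]
  have hB : |sin θ * (s ^ 2)⁻¹ * q⁻¹| ≤ (s ^ 2)⁻¹ * φ0⁻¹ := by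
    rw [abs_mul, abs_mul, abs_inv, abs_inv, abs_of_pos (by positivity : 0 < s ^ 2)]
    calc |sin θ| * (s ^ 2)⁻¹ * |q|⁻¹ ≤ 1 * (s ^ 2)⁻¹ * φ0⁻¹ := by gcongr
      _ = (s ^ 2)⁻¹ * φ0⁻¹ := by rw [one_mul]
  have hC : |sin θ * s⁻¹ * (r / q ^ 2)| ≤ t0⁻¹ * (r / q ^ 2) := by
    rw [abs_mul, abs_mul, abs_inv, abs_of_pos hs0, abs_of_nonneg (by positivity : 0 ≤ r / q ^ 2)]
    calc |sin θ| * s⁻¹ * (r / q ^ 2) ≤ 1 * t0⁻¹ * (r / q ^ 2) := by gcongr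
      _ = t0⁻¹ * (r / q ^ 2) := by rw [one_mul]
  have hAB : Ψ0 / s * s⁻¹ * φ0⁻¹ + (s ^ 2)⁻¹ * φ0⁻¹ = (1 + Ψ0) / φ0 * (1 / s ^ 2) := by
    field_simp; ring
  calc _ ≤ |cos θ * p * s⁻¹ * q⁻¹| + |sin θ * (s ^ 2)⁻¹ * q⁻¹| + |sin θ * s⁻¹ * (r / q ^ 2)| :=
        (abs_sub _ _).trans (add_le_add_left (abs_sub _ _) _)
    _ ≤ _ := by linarith

theorem integral_inv_sq_add_deriv_div_sq_le {t0 t φ0 Ψ0 : ℝ} {φ' φ'' : ℝ → ℝ} (ht0 : 0 < t0)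
    (ht : t0 ≤ t) (hφ0 : 0 < φ0) (hΨ0 : 0 ≤ Ψ0) (hφ' : ∀ x ∈ Icc t0 t, HasDerivAt φ' (φ'' x) x)
    (hφ'' : ContinuousOn φ'' (Icc t0 t)) (hlb : ∀ x ∈ Icc t0 t, φ0 ≤ |φ' x|) :
    ∫ s in t0..t, ((1 + Ψ0) / φ0 * (1 / s ^ 2) + t0⁻¹ * (φ'' s / φ' s ^ 2))
      ≤ (2 + Ψ0) / (φ0 * t0) := by
  have hne : ∀ x ∈ Icc t0 t, φ' x ≠ 0 := fun x hx => abs_pos.1 (hφ0.trans_le (hlb x hx))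
  have hpos : ∀ x ∈ Icc t0 t, 0 < x := fun x hx => ht0.trans_le hx.1
  have hsign : |(φ' t0)⁻¹ - (φ' t)⁻¹| ≤ φ0⁻¹ :=
    abs_inv_sub_inv_le_of_mul_pos hφ0
      (mul_pos_of_continuousOn_of_ne_zero ht (HasDerivAt.continuousOn hφ') hne)
      (hlb _ (left_mem_Icc.2 ht)) (hlb _ (right_mem_Icc.2 ht))
  rw [← uIcc_of_le ht] at hφ' hφ'' hne hpos
  have hid : ∀ x ∈ uIcc t0 t, HasDerivAt (fun x => x) 1 x := fun x _ => hasDerivAt_id' x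
  have hid0 : ∀ x ∈ uIcc t0 t, x ≠ 0 := fun x hx => (hpos x hx).ne'
  rw [integral_add ((intervalIntegrable_deriv_div_sq hid continuousOn_const hid0).const_mul _)
      ((intervalIntegrable_deriv_div_sq hφ' hφ'' hne).const_mul _),
    intervalIntegral.integral_const_mul, intervalIntegral.integral_const_mul,
    integral_deriv_div_sq hid continuousOn_const hid0, integral_deriv_div_sq hφ' hφ'' hne]
  calc (1 + Ψ0) / φ0 * (t0⁻¹ - t⁻¹) + t0⁻¹ * ((φ' t0)⁻¹ - (φ' t)⁻¹)
      ≤ (1 + Ψ0) / φ0 * t0⁻¹ + t0⁻¹ * φ0⁻¹ := by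
        have hdiff := (le_abs_self _).trans hsign
        gcongr
        exact sub_le_self _ (inv_nonneg.2 (ht0.trans_le ht).le)
    _ = (2 + Ψ0) / (φ0 * t0) := by field_simp; ring

theorem abs_integral_cos_mul_sin_div_le {t0 φ0 Ψ0 : ℝ} {φ φ' φ'' ψ ψ' : ℝ → ℝ}
    (ht0 : 0 < t0) (hφ0 : 0 < φ0)
    (hφd : ∀ t ∈ Ici t0, HasDerivAt φ (φ' t) t) (hφd2 : ∀ t ∈ Ici t0, HasDerivAt φ' (φ'' t) t)
    (hφ''c : ContinuousOn φ'' (Ici t0)) (hψd : ∀ t ∈ Ici t0, HasDerivAt ψ (ψ' t) t)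
    (hψ'c : ContinuousOn ψ' (Ici t0)) (hconv : ∀ t ∈ Ici t0, 0 ≤ φ'' t)
    (hφ'lb : ∀ t ∈ Ici t0, φ0 ≤ |φ' t|) (hψ'ub : ∀ t ∈ Ici t0, |ψ' t| ≤ Ψ0 / t)
    {t : ℝ} (ht : t0 ≤ t) :
    |∫ s in t0..t, cos (φ s) * sin (ψ s) / s|
      ≤ |sin (ψ t0) * t0⁻¹ * (φ' t0)⁻¹| + |sin (ψ t) * t⁻¹ * (φ' t)⁻¹|
        + ∫ s in t0..t, ((1 + Ψ0) / φ0 * (1 / s ^ 2) + t0⁻¹ * (φ'' s / φ' s ^ 2)) := by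
  have hsub : Icc t0 t ⊆ Ici t0 := Icc_subset_Ici_self
  have hpos : ∀ s ∈ Ici t0, 0 < s := fun s hs => ht0.trans_le hs
  have hne : ∀ s ∈ Ici t0, φ' s ≠ 0 := fun s hs => abs_pos.1 (hφ0.trans_le (hφ'lb s hs))
  have hψc : ContinuousOn ψ (Ici t0) := HasDerivAt.continuousOn hψd
  have hφc : ContinuousOn φ (Ici t0) := HasDerivAt.continuousOn hφd
  have hφ'c : ContinuousOn φ' (Ici t0) := HasDerivAt.continuousOn hφd2
  have hint : ∀ {f : ℝ → ℝ}, ContinuousOn f (Ici t0) → IntervalIntegrable f volume t0 t :=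
    fun hf => (hf.mono hsub).intervalIntegrable_of_Icc ht
  have hfactor : ∫ s in t0..t, cos (φ s) * sin (ψ s) / s
      = ∫ s in t0..t, sin (ψ s) * s⁻¹ * (φ' s)⁻¹ * (cos (φ s) * φ' s) := by
    refine integral_congr fun s hs => ?_
    rw [uIcc_of_le ht] at hs
    have hφ's := hne s (hsub hs)
    field_simp
  rw [hfactor]
  refine abs_integral_mul_deriv_le ht
    (fun s hs => hasDerivAt_sin_mul_inv_mul_inv (hpos s (hsub hs)).ne' (hne s (hsub hs))
      (hψd s (hsub hs)) (hφd2 s (hsub hs)))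
    (fun s hs => (hφd s (hsub hs)).sin) (hint ?_) (hint (by fun_prop)) (fun s _ => abs_sin_le_one _)
    (fun s hs => abs_deriv_sin_mul_inv_mul_inv_le ht0 hs.1 hφ0 (hφ'lb s (hsub hs))
      (hψ'ub s (hsub hs)) (hconv s (hsub hs))) (hint ?_) <;>
  fun_prop (disch := intro x (hx : x ∈ Ici t0); have := hpos x hx; have := hne x hx; positivity)

theorem oscillating_integral_bound
    (t0 φ0 Ψ0 : ℝ) (ht0 : 0 < t0) (hφ0 : 0 < φ0) (hΨ0 : 0 < Ψ0)
    (φ φ' φ'' ψ ψ' : ℝ → ℝ)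
    (hφd : ∀ t ∈ Ici t0, HasDerivAt φ (φ' t) t)
    (hφd2 : ∀ t ∈ Ici t0, HasDerivAt φ' (φ'' t) t)
    (hφ''c : ContinuousOn φ'' (Ici t0))
    (hψd : ∀ t ∈ Ici t0, HasDerivAt ψ (ψ' t) t)
    (hψ'c : ContinuousOn ψ' (Ici t0))
    (hconv : ∀ t ∈ Ici t0, 0 ≤ φ'' t)
    (hφ'lb : ∀ t ∈ Ici t0, φ0 ≤ |φ' t|)
    (hψ'ub : ∀ t ∈ Ici t0, |ψ' t| ≤ Ψ0 / t) :
    ∀ t ∈ Ici t0,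
      |∫ s in t0..t, Real.cos (φ s) * Real.sin (ψ s) / s| ≤ (4 + Ψ0) / (φ0 * t0) := by
  intro t ht
  have hboundary : ∀ s ∈ Ici t0, |sin (ψ s) * s⁻¹ * (φ' s)⁻¹| ≤ (φ0 * t0)⁻¹ :=
    fun s hs => abs_sin_mul_inv_mul_inv_le ht0 hs hφ0 (hφ'lb s hs)
  calc _ ≤ _ :=
        abs_integral_cos_mul_sin_div_le ht0 hφ0 hφd hφd2 hφ''c hψd hψ'c hconv hφ'lb hψ'ub ht
    _ ≤ (φ0 * t0)⁻¹ + (φ0 * t0)⁻¹ + (2 + Ψ0) / (φ0 * t0) := by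
        gcongr
        · exact hboundary t0 self_mem_Ici
        · exact hboundary t ht
        · exact integral_inv_sq_add_deriv_div_sq_le ht0 ht hφ0 hΨ0.le (fun s hs => hφd2 s hs.1)
            (hφ''c.mono Icc_subset_Ici_self) (fun s hs => hφ'lb s hs.1)
    _ = (4 + Ψ0) / (φ0 * t0) := by field_simp; ring
end

section
/- Let t0 > 0, let φ : [t0,∞) → ℝ be of class C² and ψ : [t0,∞) → ℝ be of class C¹. Assume φ''(t) ≥ 0 for every t ≥ t0, and that there exist positive real numbers φ0 and Ψ0 such that |φ'(t)| ≥ φ0 and |ψ'(t)| ≤ Ψ0/t for every t ≥ t0. Then the limit as t → +∞ of ∫_{t0}^t cos(φ(s))·sin(ψ(s))/s ds exists and is a real number. -/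
open Real Set Filter MeasureTheory intervalIntegral

/-!
Write `cos φ · sin ψ / s = (sin φ)' · g` with `g = sin ψ / (s φ')` and integrate by parts:
`∫ cos φ sin ψ / s = [sin φ · g] - ∫ sin φ · g'`. The boundary term is `O(1/t)`, and
`|g'| ≤ (Ψ0 + 1) / (φ0 s²) + φ'' / (t0 φ'²)`, which is integrable on `(t0, ∞)` since `φ'' / φ'²` is
the nonnegative derivative of the bounded function `-1/φ'`.
-/

theorem integrableOn_Ioi_deriv_of_nonneg_of_le {F F' : ℝ → ℝ} {a C : ℝ}
    (hF : ∀ x ∈ Ici a, HasDerivAt F (F' x) x) (hF' : ∀ x ∈ Ioi a, 0 ≤ F' x)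
    (hC : ∀ x ∈ Ici a, F x ≤ C) : IntegrableOn F' (Ioi a) := by
  have hint : ∀ b, a ≤ b → IntegrableOn F' (Ioc a b) := fun b _ =>
    integrableOn_deriv_of_nonneg (fun x hx => (hF x hx.1).continuousAt.continuousWithinAt)
      (fun x hx => hF x hx.1.le) (fun x hx => hF' x hx.1)
  refine integrableOn_Ioi_of_intervalIntegral_norm_bounded (C - F a) a (b := max a)
    (fun b => hint _ (le_max_left a b)) (tendsto_atTop_mono (le_max_right a) tendsto_id)
    (Eventually.of_forall fun b => ?_)
  have hab : a ≤ max a b := le_max_left a b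
  calc ∫ x in a..max a b, ‖F' x‖ = ∫ x in a..max a b, F' x := by
        refine integral_congr_ae (Eventually.of_forall fun x hx => ?_)
        rw [uIoc_of_le hab] at hx
        exact Real.norm_of_nonneg (hF' x hx.1)
    _ = F (max a b) - F a :=
        integral_eq_sub_of_hasDerivAt_of_le hab
          (fun x hx => (hF x hx.1).continuousAt.continuousWithinAt)
          (fun x hx => hF x hx.1.le)
          ((intervalIntegrable_iff_integrableOn_Ioc_of_le hab).mpr (hint _ hab))
    _ ≤ C - F a := by linarith [hC _ hab]

theorem integrableOn_Ioi_inv_sq {a : ℝ} (ha : 0 < a) :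
    IntegrableOn (fun x : ℝ => (x ^ 2)⁻¹) (Ioi a) := by
  refine integrableOn_Ioi_deriv_of_nonneg_of_le (F := fun x => -x⁻¹) (C := 0)
    (fun x hx => ?_) (fun x _ => by positivity) (fun x hx => ?_)
  · exact ((hasDerivAt_id' x).fun_inv (ha.trans_le hx).ne').fun_neg.congr_deriv (by ring)
  · simpa using (ha.trans_le hx).le

theorem integrableOn_Ioi_div_sq_of_hasDerivAt {φ' φ'' : ℝ → ℝ} {a c : ℝ} (hc : 0 < c)
    (hφ' : ∀ x ∈ Ici a, HasDerivAt φ' (φ'' x) x) (hφ'' : ∀ x ∈ Ici a, 0 ≤ φ'' x)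
    (hφ'c : ∀ x ∈ Ici a, c ≤ |φ' x|) :
    IntegrableOn (fun x => φ'' x / φ' x ^ 2) (Ioi a) := by
  have hne : ∀ x ∈ Ici a, φ' x ≠ 0 := fun x hx => abs_pos.mp (hc.trans_le (hφ'c x hx))
  refine integrableOn_Ioi_deriv_of_nonneg_of_le (F := fun x => -(φ' x)⁻¹) (C := c⁻¹)
    (fun x hx => ?_) (fun x hx => div_nonneg (hφ'' x (Ioi_subset_Ici_self hx)) (sq_nonneg _))
    (fun x hx => ?_)
  · exact ((hφ' x hx).fun_inv (hne x hx)).fun_neg.congr_deriv (by ring)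
  · calc -(φ' x)⁻¹ ≤ |(φ' x)⁻¹| := neg_le_abs _
      _ = |φ' x|⁻¹ := abs_inv _
      _ ≤ c⁻¹ := inv_anti₀ hc (hφ'c x hx)

theorem integrableOn_Ioi_of_hasDerivAt_add_of_norm_le {f k h M : ℝ → ℝ} {a : ℝ}
    (hh : ∀ x ∈ Ioi a, HasDerivAt h (f x + k x) x) (hf : ContinuousOn f (Ioi a))
    (hk : ∀ x ∈ Ioi a, ‖k x‖ ≤ M x) (hM : IntegrableOn M (Ioi a)) :
    IntegrableOn k (Ioi a) := by
  have hk_meas : AEStronglyMeasurable k (volume.restrict (Ioi a)) := by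
    refine ((aestronglyMeasurable_deriv h _).sub
      (hf.aestronglyMeasurable measurableSet_Ioi)).congr ?_
    filter_upwards [self_mem_ae_restrict measurableSet_Ioi] with x hx
    simp [(hh x hx).deriv]
  exact hM.mono' hk_meas ((ae_restrict_iff' measurableSet_Ioi).mpr (Eventually.of_forall hk))

theorem exists_tendsto_intervalIntegral_of_hasDerivAt_add {f k h : ℝ → ℝ} {a l : ℝ}
    (hh : ∀ x ∈ Ici a, HasDerivAt h (f x + k x) x) (hf : ContinuousOn f (Ici a))
    (hk : IntegrableOn k (Ioi a)) (hl : Tendsto h atTop (nhds l)) :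
    ∃ L, Tendsto (fun t => ∫ s in a..t, f s) atTop (nhds L) := by
  refine ⟨l - h a - ∫ s in Ioi a, k s, ?_⟩
  have hlim := (hl.sub_const (h a)).sub (intervalIntegral_tendsto_integral_Ioi a hk tendsto_id)
  refine hlim.congr' ?_
  filter_upwards [eventually_ge_atTop a] with t ht
  have hsub : uIcc a t ⊆ Ici a := by rw [uIcc_of_le ht]; exact Icc_subset_Ici_self
  have hfi : IntervalIntegrable f volume a t := (hf.mono hsub).intervalIntegrable
  have hki : IntervalIntegrable k volume a t :=
    (intervalIntegrable_iff_integrableOn_Ioc_of_le ht).mpr (hk.mono_set Ioc_subset_Ioi_self)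
  have hftc : ∫ s in a..t, (f s + k s) = h t - h a :=
    integral_eq_sub_of_hasDerivAt (fun x hx => hh x (hsub hx)) (hfi.add hki)
  rw [id, ← hftc, integral_add hfi hki]
  ring

noncomputable def amplitude (φ' ψ : ℝ → ℝ) (s : ℝ) : ℝ :=
  sin (ψ s) / (s * φ' s)

noncomputable def amplitudeDeriv (φ' φ'' ψ ψ' : ℝ → ℝ) (s : ℝ) : ℝ :=
  cos (ψ s) * ψ' s / (s * φ' s) - sin (ψ s) / (s ^ 2 * φ' s) - sin (ψ s) * φ'' s / (s * φ' s ^ 2)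

section Amplitude

variable {φ φ' φ'' ψ ψ' : ℝ → ℝ} {s : ℝ}

theorem hasDerivAt_amplitude (hψ : HasDerivAt ψ (ψ' s) s) (hφ' : HasDerivAt φ' (φ'' s) s)
    (hs : s ≠ 0) (hφ's : φ' s ≠ 0) :
    HasDerivAt (amplitude φ' ψ) (amplitudeDeriv φ' φ'' ψ ψ' s) s :=
  (hψ.sin.fun_div ((hasDerivAt_id' s).fun_mul hφ') (mul_ne_zero hs hφ's)).congr_deriv <| by
    unfold amplitudeDeriv
    field_simp
    ring

theorem hasDerivAt_sin_mul_amplitude (hφ : HasDerivAt φ (φ' s) s) (hψ : HasDerivAt ψ (ψ' s) s)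
    (hφ' : HasDerivAt φ' (φ'' s) s) (hs : s ≠ 0) (hφ's : φ' s ≠ 0) :
    HasDerivAt (fun x => sin (φ x) * amplitude φ' ψ x)
      (cos (φ s) * sin (ψ s) / s + sin (φ s) * amplitudeDeriv φ' φ'' ψ ψ' s) s :=
  (hφ.sin.fun_mul (hasDerivAt_amplitude hψ hφ' hs hφ's)).congr_deriv <| by
    unfold amplitude
    field_simp

theorem abs_amplitude_le {c : ℝ} (hc : 0 < c) (hs : 0 < s) (hφ's : c ≤ |φ' s|) :
    |amplitude φ' ψ s| ≤ (c * s)⁻¹ := by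
  rw [amplitude, abs_div, abs_mul, abs_of_pos hs, ← one_div, mul_comm c]
  gcongr
  exact abs_sin_le_one _

theorem tendsto_amplitude_atTop {a c : ℝ} (hc : 0 < c) (hφ' : ∀ s ∈ Ici a, c ≤ |φ' s|) :
    Tendsto (amplitude φ' ψ) atTop (nhds 0) := by
  refine squeeze_zero_norm' ?_ (tendsto_inv_atTop_zero.comp (tendsto_id.const_mul_atTop hc))
  filter_upwards [eventually_gt_atTop 0, eventually_ge_atTop a] with s hs has
  exact abs_amplitude_le hc hs (hφ' s has)

theorem abs_amplitudeDeriv_le {a c C : ℝ} (ha : 0 < a) (has : a ≤ s) (hc : 0 < c)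
    (hφ's : c ≤ |φ' s|) (hφ''s : 0 ≤ φ'' s) (hψ's : |ψ' s| ≤ C / s) :
    |amplitudeDeriv φ' φ'' ψ ψ' s| ≤ (C + 1) / c * (s ^ 2)⁻¹ + a⁻¹ * (φ'' s / φ' s ^ 2) := by
  have hs : 0 < s := ha.trans_le has
  have hφ's_sq : 0 < φ' s ^ 2 := by
    rw [← sq_abs]
    exact pow_pos (hc.trans_le hφ's) 2
  have h₁ : |cos (ψ s) * ψ' s / (s * φ' s)| ≤ C / c * (s ^ 2)⁻¹ := by
    have hnum : |cos (ψ s)| * |ψ' s| ≤ C / s :=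
      (mul_le_of_le_one_left (abs_nonneg _) (abs_cos_le_one _)).trans hψ's
    rw [abs_div, abs_mul, abs_mul, abs_of_pos hs]
    calc |cos (ψ s)| * |ψ' s| / (s * |φ' s|) ≤ C / s / (s * c) := by
          gcongr
          exact (mul_nonneg (abs_nonneg _) (abs_nonneg _)).trans hnum
      _ = C / c * (s ^ 2)⁻¹ := by field_simp
  have h₂ : |sin (ψ s) / (s ^ 2 * φ' s)| ≤ 1 / c * (s ^ 2)⁻¹ := by
    rw [abs_div, abs_mul, abs_of_pos (pow_pos hs 2)]
    calc |sin (ψ s)| / (s ^ 2 * |φ' s|) ≤ 1 / (s ^ 2 * c) := by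
          gcongr
          exact abs_sin_le_one _
      _ = 1 / c * (s ^ 2)⁻¹ := by field_simp
  have h₃ : |sin (ψ s) * φ'' s / (s * φ' s ^ 2)| ≤ a⁻¹ * (φ'' s / φ' s ^ 2) := by
    simp only [abs_div, abs_mul, abs_of_pos hs, abs_of_nonneg hφ''s, abs_pow, sq_abs]
    calc |sin (ψ s)| * φ'' s / (s * φ' s ^ 2) ≤ 1 * φ'' s / (a * φ' s ^ 2) := by
          gcongr
          exact abs_sin_le_one _
      _ = a⁻¹ * (φ'' s / φ' s ^ 2) := by field_simp
  calc |amplitudeDeriv φ' φ'' ψ ψ' s|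
      ≤ |cos (ψ s) * ψ' s / (s * φ' s)| + |sin (ψ s) / (s ^ 2 * φ' s)|
        + |sin (ψ s) * φ'' s / (s * φ' s ^ 2)| :=
        (abs_sub _ _).trans (add_le_add_left (abs_sub _ _) _)
    _ ≤ C / c * (s ^ 2)⁻¹ + 1 / c * (s ^ 2)⁻¹ + a⁻¹ * (φ'' s / φ' s ^ 2) := by gcongr
    _ = (C + 1) / c * (s ^ 2)⁻¹ + a⁻¹ * (φ'' s / φ' s ^ 2) := by ring

end Amplitude

theorem oscillating_integral_converges_general
    (t0 φ0 Ψ0 : ℝ) (ht0 : 0 < t0) (hφ0 : 0 < φ0)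
    (φ φ' φ'' ψ ψ' : ℝ → ℝ)
    (hφd : ∀ t ∈ Ici t0, HasDerivAt φ (φ' t) t)
    (hφd2 : ∀ t ∈ Ici t0, HasDerivAt φ' (φ'' t) t)
    (hψd : ∀ t ∈ Ici t0, HasDerivAt ψ (ψ' t) t)
    (hconv : ∀ t ∈ Ici t0, 0 ≤ φ'' t)
    (hφ'lb : ∀ t ∈ Ici t0, φ0 ≤ |φ' t|)
    (hψ'ub : ∀ t ∈ Ici t0, |ψ' t| ≤ Ψ0 / t) :
    ∃ L : ℝ, Tendsto (fun t => ∫ s in t0..t, Real.cos (φ s) * Real.sin (ψ s) / s)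
      atTop (nhds L) := by
  have hpos : ∀ t ∈ Ici t0, 0 < t := fun t ht => ht0.trans_le ht
  have hφ'ne : ∀ t ∈ Ici t0, φ' t ≠ 0 := fun t ht => abs_pos.mp (hφ0.trans_le (hφ'lb t ht))
  have hderiv : ∀ t ∈ Ici t0, HasDerivAt (fun x => sin (φ x) * amplitude φ' ψ x)
      (cos (φ t) * sin (ψ t) / t + sin (φ t) * amplitudeDeriv φ' φ'' ψ ψ' t) t :=
    fun t ht => hasDerivAt_sin_mul_amplitude (hφd t ht) (hψd t ht) (hφd2 t ht) (hpos t ht).ne'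
      (hφ'ne t ht)
  have hcont : ContinuousOn (fun t => cos (φ t) * sin (ψ t) / t) (Ici t0) := fun t ht =>
    (((hφd t ht).cos.fun_mul (hψd t ht).sin).continuousAt.div continuousAt_id
      (hpos t ht).ne').continuousWithinAt
  have hmajorant : IntegrableOn
      (fun t => (Ψ0 + 1) / φ0 * (t ^ 2)⁻¹ + t0⁻¹ * (φ'' t / φ' t ^ 2)) (Ioi t0) :=
    ((integrableOn_Ioi_inv_sq ht0).const_mul _).add
      ((integrableOn_Ioi_div_sq_of_hasDerivAt hφ0 hφd2 hconv hφ'lb).const_mul _)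
  have hremainder : IntegrableOn (fun t => sin (φ t) * amplitudeDeriv φ' φ'' ψ ψ' t) (Ioi t0) := by
    refine integrableOn_Ioi_of_hasDerivAt_add_of_norm_le
      (fun t ht => hderiv t (Ioi_subset_Ici_self ht)) (hcont.mono Ioi_subset_Ici_self)
      (fun t ht => ?_) hmajorant
    have ht' : t ∈ Ici t0 := Ioi_subset_Ici_self ht
    rw [norm_mul, Real.norm_eq_abs, Real.norm_eq_abs]
    exact (mul_le_of_le_one_left (abs_nonneg _) (abs_sin_le_one _)).trans
      (abs_amplitudeDeriv_le ht0 ht' hφ0 (hφ'lb t ht') (hconv t ht') (hψ'ub t ht'))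
  have hboundary : Tendsto (fun t => sin (φ t) * amplitude φ' ψ t) atTop (nhds 0) :=
    isBoundedUnder_le_mul_tendsto_zero ⟨1, eventually_map.mpr (Eventually.of_forall fun t =>
      abs_sin_le_one _)⟩ (tendsto_amplitude_atTop hφ0 hφ'lb)
  exact exists_tendsto_intervalIntegral_of_hasDerivAt_add hderiv hcont hremainder hboundary

theorem oscillating_integral_converges
    (t0 φ0 Ψ0 : ℝ) (ht0 : 0 < t0) (hφ0 : 0 < φ0) (hΨ0 : 0 < Ψ0)
    (φ φ' φ'' ψ ψ' : ℝ → ℝ)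
    (hφd : ∀ t ∈ Ici t0, HasDerivAt φ (φ' t) t)
    (hφd2 : ∀ t ∈ Ici t0, HasDerivAt φ' (φ'' t) t)
    (hφ''c : ContinuousOn φ'' (Ici t0))
    (hψd : ∀ t ∈ Ici t0, HasDerivAt ψ (ψ' t) t)
    (hψ'c : ContinuousOn ψ' (Ici t0))
    (hconv : ∀ t ∈ Ici t0, 0 ≤ φ'' t)
    (hφ'lb : ∀ t ∈ Ici t0, φ0 ≤ |φ' t|)
    (hψ'ub : ∀ t ∈ Ici t0, |ψ' t| ≤ Ψ0 / t) :
    ∃ L : ℝ, Tendsto (fun t => ∫ s in t0..t, Real.cos (φ s) * Real.sin (ψ s) / s)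
      atTop (nhds L) :=
  oscillating_integral_converges_general t0 φ0 Ψ0 ht0 hφ0 φ φ' φ'' ψ ψ' hφd hφd2 hψd hconv hφ'lb
    hψ'ub
end

section
/- Let H0, λ, t0 be positive real numbers, and let h : [t0,∞) → ℝ be of class C¹ with |h'(t)| ≤ H0/t for every t ≥ t0. Then for every positive integer n and every t ≥ t0 one has |∫_{t0}^t cos(nλs + n·h(s))/s ds| ≤ 2(H0 + 4)/(λ·t0). -/
/-!
Write `cos (nλs + n h(s)) / s` as the real part of `e^{i n h(s)} / s · e^{i nλ s}` and integrate
by parts once against `e^{i nλ s} / (i nλ)`, which gains the factor `1 / (nλ)`. The two boundary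
terms are each at most `1 / (nλ t0)`, and the derivative of `e^{i n h(s)} / s` is bounded by
`(n H0 + 1) / s²`, whose integral over `[t0, ∞)` is `(n H0 + 1) / t0`, so the remaining integral
is at most `(n H0 + 1) / (nλ t0)`. Altogether the integral is at most
`(n H0 + 3) / (nλ t0) ≤ (H0 + 3) / (λ t0)`.
-/
open Real Set Filter MeasureTheory intervalIntegral

theorem intervalIntegrable_div_sq_of_pos {a b : ℝ} (K : ℝ) (ha : 0 < a) (hab : a ≤ b) :
    IntervalIntegrable (fun s => K / s ^ 2) volume a b :=
  ContinuousOn.intervalIntegrable (continuousOn_const.div (continuousOn_pow 2) fun _ hs =>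
    (pow_pos (ha.trans_le (uIcc_of_le hab ▸ hs).1) 2).ne')

theorem integral_div_sq_of_pos {a b : ℝ} (K : ℝ) (ha : 0 < a) (hab : a ≤ b) :
    ∫ s in a..b, K / s ^ 2 = K / a - K / b := by
  have hderiv : ∀ s ∈ uIcc a b, HasDerivAt (fun x => -(K * x⁻¹)) (K / s ^ 2) s := fun s hs =>
    ((hasDerivAt_inv (ha.trans_le (uIcc_of_le hab ▸ hs).1).ne').const_mul K).neg.congr_deriv
      (by ring)
  rw [integral_eq_sub_of_hasDerivAt hderiv (intervalIntegrable_div_sq_of_pos K ha hab)]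
  ring

theorem norm_integral_mul_deriv_le {A : Type*} [NormedRing A] [NormedAlgebra ℝ A]
    [CompleteSpace A] {u u' v v' : ℝ → A} {a b B C K : ℝ} (ha : 0 < a) (hab : a ≤ b)
    (hu : ∀ s ∈ Icc a b, HasDerivAt u (u' s) s) (hv : ∀ s ∈ Icc a b, HasDerivAt v (v' s) s)
    (hu' : ContinuousOn u' (Icc a b)) (hv' : ContinuousOn v' (Icc a b))
    (huB : ∀ s ∈ Icc a b, ‖u s‖ ≤ B) (hvC : ∀ s ∈ Icc a b, ‖v s‖ ≤ C)
    (hu'K : ∀ s ∈ Icc a b, ‖u' s‖ ≤ K / s ^ 2) :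
    ‖∫ s in a..b, u s * v' s‖ ≤ C * (2 * B + K / a) := by
  have hIcc : uIcc a b = Icc a b := uIcc_of_le hab
  have ha_mem : a ∈ Icc a b := left_mem_Icc.2 hab
  have hb_mem : b ∈ Icc a b := right_mem_Icc.2 hab
  have hC : 0 ≤ C := (norm_nonneg _).trans (hvC a ha_mem)
  have hK : 0 ≤ K := by
    have := (norm_nonneg _).trans (hu'K a ha_mem)
    rwa [le_div_iff₀ (by positivity), zero_mul] at this
  have hrem : ‖∫ s in a..b, u' s * v s‖ ≤ C * (K / a) := calc
    ‖∫ s in a..b, u' s * v s‖ ≤ ∫ s in a..b, C * (K / s ^ 2) := by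
      refine norm_integral_le_of_norm_le hab (ae_of_all _ fun s hs => ?_) ?_
      · have hs : s ∈ Icc a b := Ioc_subset_Icc_self hs
        calc ‖u' s * v s‖ ≤ ‖u' s‖ * ‖v s‖ := norm_mul_le _ _
          _ ≤ K / s ^ 2 * C := mul_le_mul (hu'K s hs) (hvC s hs) (norm_nonneg _) (by positivity)
          _ = C * (K / s ^ 2) := mul_comm _ _
      · exact (intervalIntegrable_div_sq_of_pos K ha hab).const_mul C
    _ = C * (K / a - K / b) := by
      rw [intervalIntegral.integral_const_mul, integral_div_sq_of_pos K ha hab]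
    _ ≤ C * (K / a) := by gcongr; linarith [div_nonneg hK (ha.trans_le hab).le]
  rw [integral_mul_deriv_eq_deriv_mul (hIcc ▸ hu) (hIcc ▸ hv)
    (ContinuousOn.intervalIntegrable (hIcc ▸ hu')) (ContinuousOn.intervalIntegrable (hIcc ▸ hv'))]
  have hend : ∀ s ∈ Icc a b, ‖u s * v s‖ ≤ B * C := fun s hs =>
    (norm_mul_le _ _).trans
      (mul_le_mul (huB s hs) (hvC s hs) (norm_nonneg _) ((norm_nonneg _).trans (huB s hs)))
  calc _ ≤ ‖u b * v b - u a * v a‖ + ‖∫ s in a..b, u' s * v s‖ := norm_sub_le _ _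
    _ ≤ ‖u b * v b‖ + ‖u a * v a‖ + ‖∫ s in a..b, u' s * v s‖ := by
      gcongr; exact norm_sub_le _ _
    _ ≤ B * C + B * C + C * (K / a) := by gcongr <;> exact hend _ ‹_›
    _ = C * (2 * B + K / a) := by ring

open Complex in
theorem hasDerivAt_cexp_mul_I_div {φ : ℝ → ℝ} {φ' s : ℝ} (hφ : HasDerivAt φ φ' s) (hs : s ≠ 0) :
    HasDerivAt (fun x : ℝ => exp (φ x * I) / x) (exp (φ s * I) * (φ' * s * I - 1) / s ^ 2) s := by
  refine ((hφ.ofReal_comp.mul_const I).cexp.div (hasDerivAt_id s).ofReal_comp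
    (ofReal_ne_zero.2 hs)).congr_deriv ?_
  simp only [id, ofReal_one]
  ring

open Complex in
theorem norm_integral_cexp_div_le {φ φ' : ℝ → ℝ} {L K a b : ℝ} (hL : 0 < L) (ha : 0 < a)
    (hab : a ≤ b) (hφ : ∀ s ∈ Icc a b, HasDerivAt φ (φ' s) s) (hφ' : ContinuousOn φ' (Icc a b))
    (hφ'K : ∀ s ∈ Icc a b, |φ' s| ≤ K / s) :
    ‖∫ s in a..b, exp (↑(L * s + φ s) * I) / s‖ ≤ (K + 3) / (L * a) := by
  have hpos : ∀ s ∈ Icc a b, 0 < s := fun s hs => ha.trans_le hs.1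
  set u : ℝ → ℂ := fun x => exp (φ x * I) / x
  set u' : ℝ → ℂ := fun s => exp (φ s * I) * (φ' s * s * I - 1) / s ^ 2
  set v : ℝ → ℂ := fun x => exp (↑(L * x) * I) / (L * I)
  set v' : ℝ → ℂ := fun x => exp (↑(L * x) * I)
  have hu : ∀ s ∈ Icc a b, HasDerivAt u (u' s) s := fun s hs =>
    hasDerivAt_cexp_mul_I_div (hφ s hs) (hpos s hs).ne'
  have hv : ∀ s, HasDerivAt v (v' s) s := fun s => by
    refine (((((hasDerivAt_id s).const_mul L).ofReal_comp).mul_const I).cexp.div_const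
      ((L : ℂ) * I)).congr_deriv ?_
    rw [mul_one, mul_div_assoc,
      div_self (mul_ne_zero (ofReal_ne_zero.2 hL.ne') I_ne_zero), mul_one]
    rfl
  have hu' : ContinuousOn u' (Icc a b) := by
    have hφc : ContinuousOn φ (Icc a b) := fun s hs => (hφ s hs).continuousAt.continuousWithinAt
    exact ContinuousOn.div (by fun_prop) (by fun_prop) fun s hs =>
      pow_ne_zero 2 (ofReal_ne_zero.2 (hpos s hs).ne')
  have huB : ∀ s ∈ Icc a b, ‖u s‖ ≤ 1 / a := fun s hs => by
    rw [norm_div, norm_exp_ofReal_mul_I, norm_real, Real.norm_of_nonneg (hpos s hs).le]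
    exact one_div_le_one_div_of_le ha hs.1
  have hvC : ∀ s ∈ Icc a b, ‖v s‖ ≤ 1 / L := fun s _ => by
    rw [norm_div, norm_exp_ofReal_mul_I, norm_mul, norm_I, mul_one, norm_real,
      Real.norm_of_nonneg hL.le]
  have hu'K : ∀ s ∈ Icc a b, ‖u' s‖ ≤ (K + 1) / s ^ 2 := fun s hs => by
    have hφ's : |φ' s| * s ≤ K := (le_div_iff₀ (hpos s hs)).1 (hφ'K s hs)
    rw [norm_div, norm_mul, norm_exp_ofReal_mul_I, one_mul, norm_pow, norm_real,
      Real.norm_of_nonneg (hpos s hs).le]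
    gcongr
    calc ‖(φ' s : ℂ) * s * I - 1‖ ≤ ‖(φ' s : ℂ) * s * I‖ + ‖(1 : ℂ)‖ := norm_sub_le _ _
      _ = |φ' s| * s + 1 := by
        rw [norm_mul, norm_mul, norm_I, norm_real, norm_real, norm_one, Real.norm_eq_abs,
          Real.norm_of_nonneg (hpos s hs).le, mul_one]
      _ ≤ K + 1 := by linarith
  have hsplit : ∀ s, exp (↑(L * s + φ s) * I) / s = u s * v' s := fun s => by
    simp only [u, v']
    push_cast
    rw [add_mul, Complex.exp_add]
    ring
  simp only [hsplit]
  calc _ ≤ 1 / L * (2 * (1 / a) + (K + 1) / a) :=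
        norm_integral_mul_deriv_le ha hab hu (fun s _ => hv s) hu'
          (by fun_prop : Continuous v').continuousOn huB hvC hu'K
    _ = (K + 3) / (L * a) := by field_simp; ring

theorem abs_integral_cos_div_le {φ φ' : ℝ → ℝ} {L K a b : ℝ} (hL : 0 < L) (ha : 0 < a)
    (hab : a ≤ b) (hφ : ∀ s ∈ Icc a b, HasDerivAt φ (φ' s) s) (hφ' : ContinuousOn φ' (Icc a b))
    (hφ'K : ∀ s ∈ Icc a b, |φ' s| ≤ K / s) :
    |∫ s in a..b, cos (L * s + φ s) / s| ≤ (K + 3) / (L * a) := by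
  have hφc : ContinuousOn φ (Icc a b) := fun s hs => (hφ s hs).continuousAt.continuousWithinAt
  have hintegrable : IntervalIntegrable (fun s : ℝ => Complex.exp (↑(L * s + φ s) * Complex.I) / s)
      volume a b := by
    refine ContinuousOn.intervalIntegrable ?_
    rw [uIcc_of_le hab]
    refine ContinuousOn.div (by fun_prop) (by fun_prop) fun s hs =>
      Complex.ofReal_ne_zero.2 (ha.trans_le hs.1).ne'
  have hre := intervalIntegral_re hintegrable
  simp only [RCLike.re_to_complex, Complex.div_ofReal_re, Complex.exp_ofReal_mul_I_re] at hre
  rw [hre]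
  exact (Complex.abs_re_le_norm _).trans (norm_integral_cexp_div_le hL ha hab hφ hφ' hφ'K)

theorem osc_int_bound
    (H0 lam t0 : ℝ) (hH0 : 0 < H0) (hlam : 0 < lam) (ht0 : 0 < t0)
    (h h' : ℝ → ℝ)
    (hhd : ∀ t ∈ Ici t0, HasDerivAt h (h' t) t)
    (hh'c : ContinuousOn h' (Ici t0))
    (hh' : ∀ t ∈ Ici t0, |h' t| ≤ H0 / t) :
    ∀ n : ℕ, 0 < n → ∀ t ∈ Ici t0,
      |∫ s in t0..t, Real.cos ((n : ℝ) * lam * s + (n : ℝ) * h s) / s| ≤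
        2 * (H0 + 4) / (lam * t0) := by
  intro n hn t ht
  have hn1 : (1 : ℝ) ≤ n := Nat.one_le_cast.2 hn
  have hsub : Icc t0 t ⊆ Ici t0 := Icc_subset_Ici_self
  have hnh' : ∀ s ∈ Icc t0 t, |n * h' s| ≤ n * H0 / s := fun s hs => by
    rw [abs_mul, Nat.abs_cast, mul_div_assoc]
    exact mul_le_mul_of_nonneg_left (hh' s (hsub hs)) n.cast_nonneg
  calc _ ≤ (n * H0 + 3) / (n * lam * t0) :=
        abs_integral_cos_div_le (by positivity) ht0 ht (fun s hs => (hhd s (hsub hs)).const_mul _)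
          (continuousOn_const.mul (hh'c.mono hsub)) hnh'
    _ ≤ 2 * (H0 + 4) / (lam * t0) := by
      have hnum : n * H0 + 3 ≤ 2 * (H0 + 4) * n := by nlinarith
      rw [div_le_div_iff₀ (by positivity) (by positivity)]
      nlinarith [mul_le_mul_of_nonneg_right hnum (mul_pos hlam ht0).le]
end

section
/- Let H0, λ, t0 be positive real numbers, and let h : [t0,∞) → ℝ be of class C¹ with |h'(t)| ≤ H0/t for every t ≥ t0. Then for every positive integer n the limit as t → +∞ of ∫_{t0}^t cos(nλs + n·h(s))/s ds exists and is a real number. -/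
/-!
The phase `φ(s) = nλs + n h(s)` has derivative `nλ + O(1/s)`, so integrating by parts against
`sin φ(s) / (nλ s)` writes `cos φ(s) / s` as the derivative of a function tending to `0`, plus a
remainder of size `O(1/s²)`, which is integrable at infinity.
-/

open Real Set Filter MeasureTheory intervalIntegral Topology

theorem tendsto_intervalIntegral_of_hasDerivAt_add_integrableOn
    {E : Type*} [NormedAddCommGroup E] [NormedSpace ℝ E] [CompleteSpace E]
    {F f g : ℝ → E} {a : ℝ} {l : E}
    (hF : ∀ s ∈ Ici a, HasDerivAt F (f s + g s) s) (hf : ContinuousOn f (Ici a))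
    (hg : IntegrableOn g (Ioi a)) (hFl : Tendsto F atTop (𝓝 l)) :
    Tendsto (fun t => ∫ s in a..t, f s) atTop (𝓝 (l - F a - ∫ s in Ioi a, g s)) := by
  have hftc : ∀ t ≥ a, ∫ s in a..t, f s = F t - F a - ∫ s in a..t, g s := by
    intro t ht
    have hsub : uIcc a t ⊆ Ici a := by
      rw [uIcc_of_le ht]
      exact Icc_subset_Ici_self
    have hfi : IntervalIntegrable f volume a t := (hf.mono hsub).intervalIntegrable
    have hgi : IntervalIntegrable g volume a t :=
      (intervalIntegrable_iff_integrableOn_Ioc_of_le ht).mpr (hg.mono_set Ioc_subset_Ioi_self)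
    rw [← integral_eq_sub_of_hasDerivAt (fun s hs => hF s (hsub hs)) (hfi.add hgi),
      integral_add hfi hgi, add_sub_cancel_right]
  refine Tendsto.congr' ?_
    ((hFl.sub_const (F a)).sub (intervalIntegral_tendsto_integral_Ioi a hg tendsto_id))
  filter_upwards [eventually_ge_atTop a] with t ht
  exact (hftc t ht).symm

theorem integrableOn_Ioi_of_abs_le_div_sq {g : ℝ → ℝ} {a C : ℝ} (ha : 0 < a)
    (hg : ContinuousOn g (Ici a)) (hgC : ∀ s ∈ Ici a, |g s| ≤ C / s ^ 2) :
    IntegrableOn g (Ioi a) := by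
  refine ((integrableOn_Ioi_rpow_of_lt (by norm_num : (-2 : ℝ) < -1) ha).const_mul C).mono'
    ((hg.mono Ioi_subset_Ici_self).aestronglyMeasurable measurableSet_Ioi) ?_
  filter_upwards [ae_restrict_mem measurableSet_Ioi] with s hs
  rw [Real.norm_eq_abs, rpow_neg (ha.trans hs).le, rpow_two, ← div_eq_mul_inv]
  exact hgC s (mem_Ici_of_Ioi hs)

theorem hasDerivAt_sin_div_mul {φ : ℝ → ℝ} {c e s : ℝ} (hc : c ≠ 0) (hs : s ≠ 0)
    (hφ : HasDerivAt φ (c + e) s) :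
    HasDerivAt (fun x => sin (φ x) / (c * x))
      (cos (φ s) / s + (cos (φ s) * e * s - sin (φ s)) / (c * s ^ 2)) s := by
  refine (hφ.sin.fun_div ((hasDerivAt_id' s).const_mul c) (mul_ne_zero hc hs)).congr_deriv ?_
  field_simp
  ring

theorem abs_cos_mul_mul_sub_sin_le {θ e s K : ℝ} (hs : 0 < s) (he : |e| ≤ K / s) :
    |cos θ * e * s - sin θ| ≤ K + 1 := by
  have hes : |e| * s ≤ K := (le_div_iff₀ hs).mp he
  calc |cos θ * e * s - sin θ| ≤ |cos θ| * |e| * s + |sin θ| :=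
        (abs_sub _ _).trans_eq (by rw [abs_mul, abs_mul, abs_of_pos hs])
    _ ≤ 1 * |e| * s + 1 := by
        gcongr
        exacts [abs_cos_le_one θ, abs_sin_le_one θ]
    _ ≤ K + 1 := by linarith

theorem tendsto_sin_div_mul_atTop (φ : ℝ → ℝ) (c : ℝ) :
    Tendsto (fun x => sin (φ x) / (c * x)) atTop (𝓝 0) := by
  simp_rw [div_eq_mul_inv, mul_inv]
  exact bdd_le_mul_tendsto_zero' 1 (.of_forall fun x => abs_sin_le_one _)
    (by simpa using tendsto_inv_atTop_zero.const_mul c⁻¹)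

theorem exists_tendsto_integral_cos_div_of_hasDerivAt
    {φ e : ℝ → ℝ} {a c K : ℝ} (ha : 0 < a) (hc : c ≠ 0)
    (hφ : ∀ s ∈ Ici a, HasDerivAt φ (c + e s) s) (he : ContinuousOn e (Ici a))
    (heK : ∀ s ∈ Ici a, |e s| ≤ K / s) :
    ∃ L, Tendsto (fun t => ∫ s in a..t, cos (φ s) / s) atTop (𝓝 L) := by
  have hpos : ∀ s ∈ Ici a, 0 < s := fun s hs => ha.trans_le hs
  have hφc : ContinuousOn φ (Ici a) := fun s hs => (hφ s hs).continuousAt.continuousWithinAt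
  have hrem : IntegrableOn (fun s => (cos (φ s) * e s * s - sin (φ s)) / (c * s ^ 2)) (Ioi a) := by
    refine integrableOn_Ioi_of_abs_le_div_sq (C := (K + 1) / |c|) ha ?_ fun s hs => ?_
    · refine ContinuousOn.div (by fun_prop) (by fun_prop) fun s hs => ?_
      exact mul_ne_zero hc (pow_ne_zero 2 (hpos s hs).ne')
    · rw [abs_div, abs_mul, abs_of_pos (pow_pos (hpos s hs) 2), div_div]
      exact div_le_div_of_nonneg_right (abs_cos_mul_mul_sub_sin_le (hpos s hs) (heK s hs))
        (by positivity)
  exact ⟨_, tendsto_intervalIntegral_of_hasDerivAt_add_integrableOn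
    (fun s hs => hasDerivAt_sin_div_mul hc (hpos s hs).ne' (hφ s hs))
    (ContinuousOn.div (by fun_prop) continuousOn_id fun s hs => (hpos s hs).ne') hrem
    (tendsto_sin_div_mul_atTop φ c)⟩

theorem osc_int_converges_general
    (H0 lam t0 : ℝ) (hlam : 0 < lam) (ht0 : 0 < t0)
    (h h' : ℝ → ℝ)
    (hhd : ∀ t ∈ Ici t0, HasDerivAt h (h' t) t)
    (hh'c : ContinuousOn h' (Ici t0))
    (hh' : ∀ t ∈ Ici t0, |h' t| ≤ H0 / t) :
    ∀ n : ℕ, 0 < n →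
      ∃ L : ℝ, Tendsto (fun t => ∫ s in t0..t, Real.cos ((n : ℝ) * lam * s + (n : ℝ) * h s) / s)
        atTop (nhds L) := by
  intro n hn
  have hn' : (0 : ℝ) < n := Nat.cast_pos.mpr hn
  refine exists_tendsto_integral_cos_div_of_hasDerivAt (e := fun s => n * h' s) (K := n * H0)
    ht0 (mul_pos hn' hlam).ne' (fun s hs => ?_) (continuousOn_const.mul hh'c) (fun s hs => ?_)
  · simpa using ((hasDerivAt_id' s).const_mul (n * lam)).fun_add ((hhd s hs).const_mul (n : ℝ))
  · rw [abs_mul, abs_of_pos hn', mul_div_assoc]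
    exact mul_le_mul_of_nonneg_left (hh' s hs) hn'.le

theorem osc_int_converges
    (H0 lam t0 : ℝ) (hH0 : 0 < H0) (hlam : 0 < lam) (ht0 : 0 < t0)
    (h h' : ℝ → ℝ)
    (hhd : ∀ t ∈ Ici t0, HasDerivAt h (h' t) t)
    (hh'c : ContinuousOn h' (Ici t0))
    (hh' : ∀ t ∈ Ici t0, |h' t| ≤ H0 / t) :
    ∀ n : ℕ, 0 < n →
      ∃ L : ℝ, Tendsto (fun t => ∫ s in t0..t, Real.cos ((n : ℝ) * lam * s + (n : ℝ) * h s) / s)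
        atTop (nhds L) :=
  osc_int_converges_general H0 lam t0 hlam ht0 h h' hhd hh'c hh'
end

section
/- Let H0, λ, t0 be positive real numbers, let α > 1, and let h : [t0,∞) → ℝ be of class C¹ with |h'(t)| ≤ H0/t for every t ≥ t0. Then for every t ≥ t0 one has |∫_{t0}^t sin(s^α)·cos(2λs + 2h(s))/s ds| ≤ 5(H0 + 2)/(λ·t0) + (log 3)/(α − 1). -/
/-!
By `2 sin x cos y = sin (x + y) + sin (x - y)` the integrand is half the sum of
`sin (s ^ α ± (2λs + 2h s)) / s`. In both terms the phase `φ s = s ^ α ± 2λs` is convex, and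
`sin (φ + w) / s` with `w = ±2h` splits into `sin φ` and `sin (φ + π/2)` times amplitudes of
size `≤ 1/s` and variation `≤ (2H0 + 1)/s²`. Wherever `|φ'| ≥ μ`, integrating by parts against
`(-cos φ)' = φ' sin φ` bounds such an integral by `O((H0 + 2)/(μ t0))`. For the phase
`s ^ α + 2λs` this holds everywhere with `μ = 2λ`. For `s ^ α - 2λs` it holds with `μ = λ`
outside the window `[c₁, c₂]` around the stationary point, where `α c₁ ^ (α - 1) = λ` and
`α c₂ ^ (α - 1) = 3λ`; on the window the integrand is at most `1/s`, which contributes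
`log (c₂ / c₁) = log 3 / (α - 1)`.
-/

open Real Set Filter MeasureTheory intervalIntegral

lemma integral_inv_sq_le {a b : ℝ} (ha : 0 < a) (hab : a ≤ b) :
    ∫ s in a..b, (s ^ 2)⁻¹ ≤ a⁻¹ := by
  have hpos : ∀ s ∈ uIcc a b, 0 < s := fun s hs => ha.trans_le (uIcc_of_le hab ▸ hs).1
  rw [integral_eq_sub_of_hasDerivAt (f := fun s => -s⁻¹)
    (fun s hs => (hasDerivAt_inv (hpos s hs).ne').neg.congr_deriv (by ring))
    (intervalIntegrable_inv (fun s hs => (pow_pos (hpos s hs) 2).ne') (continuousOn_id.pow 2))]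
  have : 0 ≤ b⁻¹ := inv_nonneg.2 (ha.le.trans hab)
  linarith

lemma abs_integral_le_of_three_regions {f : ℝ → ℝ} {a b c₁ c₂ B₁ B₂ B₃ : ℝ} (hab : a ≤ b)
    (hc : c₁ ≤ c₂) (hf : IntervalIntegrable f volume a b)
    (hB₁ : 0 ≤ B₁) (hB₂ : 0 ≤ B₂) (hB₃ : 0 ≤ B₃)
    (h₁ : ∀ y, a < y → y ≤ b → y ≤ c₁ → |∫ s in a..y, f s| ≤ B₁)
    (h₂ : ∀ x y, a ≤ x → x < y → y ≤ b → c₁ ≤ x → y ≤ c₂ → |∫ s in x..y, f s| ≤ B₂)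
    (h₃ : ∀ x, a ≤ x → x < b → c₂ ≤ x → |∫ s in x..b, f s| ≤ B₃) :
    |∫ s in a..b, f s| ≤ B₁ + B₂ + B₃ := by
  set p := max a (min c₁ b)
  set q := max a (min c₂ b)
  have hap : a ≤ p := le_max_left _ _
  have hpq : p ≤ q := max_le_max le_rfl (min_le_min_right b hc)
  have hqb : q ≤ b := max_le hab (min_le_right _ _)
  have hf' : ∀ x ∈ Icc a b, ∀ y ∈ Icc a b, IntervalIntegrable f volume x y := fun x hx y hy =>
    hf.mono_set (uIcc_subset_uIcc (Icc_subset_uIcc hx) (Icc_subset_uIcc hy))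
  have e₁ : |∫ s in a..p, f s| ≤ B₁ := by
    rcases hap.eq_or_lt with h | h
    · rw [← h, integral_same, abs_zero]
      exact hB₁
    · exact h₁ p h (hpq.trans hqb) (by grind)
  have e₂ : |∫ s in p..q, f s| ≤ B₂ := by
    rcases hpq.eq_or_lt with h | h
    · rw [← h, integral_same, abs_zero]
      exact hB₂
    · exact h₂ p q hap h hqb (by grind) (by grind)
  have e₃ : |∫ s in q..b, f s| ≤ B₃ := by
    rcases hqb.eq_or_lt with h | h
    · rw [h, integral_same, abs_zero]
      exact hB₃
    · exact h₃ q (hap.trans hpq) h (by grind)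
  rw [← integral_add_adjacent_intervals (b := q) (hf' a ⟨le_rfl, hab⟩ q ⟨hap.trans hpq, hqb⟩)
      (hf' q ⟨hap.trans hpq, hqb⟩ b ⟨hab, le_rfl⟩),
    ← integral_add_adjacent_intervals (b := p) (hf' a ⟨le_rfl, hab⟩ p ⟨hap, hpq.trans hqb⟩)
      (hf' p ⟨hap, hpq.trans hqb⟩ q ⟨hap.trans hpq, hqb⟩)]
  exact (abs_add_le _ _).trans (add_le_add ((abs_add_le _ _).trans (add_le_add e₁ e₂)) e₃)

lemma integral_abs_eq_abs_integral {f : ℝ → ℝ} {a b : ℝ} (hab : a ≤ b)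
    (hf : (∀ s ∈ Icc a b, 0 ≤ f s) ∨ ∀ s ∈ Icc a b, f s ≤ 0) :
    ∫ s in a..b, |f s| = |∫ s in a..b, f s| := by
  rcases hf with hf | hf
  · rw [integral_congr fun s hs => abs_of_nonneg (hf s (uIcc_of_le hab ▸ hs)),
      abs_of_nonneg (integral_nonneg hab hf)]
  · have hf' : ∀ s ∈ Icc a b, 0 ≤ -f s := fun s hs => neg_nonneg.2 (hf s hs)
    rw [integral_congr fun s hs => abs_of_nonpos (hf s (uIcc_of_le hab ▸ hs)),
      intervalIntegral.integral_neg, abs_of_nonpos]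
    simpa only [intervalIntegral.integral_neg, neg_nonneg] using integral_nonneg hab hf'

lemma nonneg_of_abs_le_div {x W a : ℝ} (ha : 0 < a) (h : |x| ≤ W / a) : 0 ≤ W := by
  have := (abs_nonneg x).trans h
  rwa [le_div_iff₀ ha, zero_mul] at this

section FirstDerivativeTest

variable {a b μ : ℝ} {φ φ' φ'' : ℝ → ℝ}

lemma integral_abs_deriv_div_sq_le (hab : a ≤ b) (hμ : 0 < μ)
    (hφ' : ∀ s ∈ Icc a b, HasDerivAt φ' (φ'' s) s) (hφ''c : ContinuousOn φ'' (Icc a b))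
    (hsign : (∀ s ∈ Icc a b, 0 ≤ φ'' s) ∨ ∀ s ∈ Icc a b, φ'' s ≤ 0)
    (hφμ : ∀ s ∈ Icc a b, μ ≤ φ' s) :
    ∫ s in a..b, |φ'' s| / φ' s ^ 2 ≤ 1 / μ := by
  have hpos : ∀ s ∈ Icc a b, 0 < φ' s := fun s hs => hμ.trans_le (hφμ s hs)
  have hφ'c : ContinuousOn φ' (Icc a b) := fun s hs => (hφ' s hs).continuousAt.continuousWithinAt
  set f := fun s => φ'' s / φ' s ^ 2
  have hf : IntervalIntegrable f volume a b :=
    (hφ''c.div (hφ'c.pow 2) fun s hs => (pow_pos (hpos s hs) 2).ne').intervalIntegrable_of_Icc hab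
  have hFTC : ∫ s in a..b, f s = (φ' a)⁻¹ - (φ' b)⁻¹ := by
    rw [integral_eq_sub_of_hasDerivAt (f := fun x => -(φ' x)⁻¹) (fun s hs => ?_) hf]
    · ring
    rw [uIcc_of_le hab] at hs
    exact ((hφ' s hs).inv (hpos s hs).ne').neg.congr_deriv (by simp only [f]; ring)
  have habs : ∫ s in a..b, |φ'' s| / φ' s ^ 2 = |∫ s in a..b, f s| := by
    rw [← integral_abs_eq_abs_integral hab (hsign.imp (fun h s hs => div_nonneg (h s hs)
      (sq_nonneg _)) fun h s hs => div_nonpos_of_nonpos_of_nonneg (h s hs) (sq_nonneg _))]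
    exact integral_congr fun s _ => by simp only [abs_div, abs_sq]
  have ha := hφμ a ⟨le_rfl, hab⟩
  have hb := hφμ b ⟨hab, le_rfl⟩
  rw [habs, hFTC, one_div]
  exact abs_sub_le_of_nonneg_of_le (inv_nonneg.2 (hμ.trans_le ha).le) (inv_anti₀ hμ ha)
    (inv_nonneg.2 (hμ.trans_le hb).le) (inv_anti₀ hμ hb)

lemma integral_abs_deriv_div_le (hab : a ≤ b) (hμ : 0 < μ)
    (hφ' : ∀ s ∈ Icc a b, HasDerivAt φ' (φ'' s) s) (hφ''c : ContinuousOn φ'' (Icc a b))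
    (hsign : (∀ s ∈ Icc a b, 0 ≤ φ'' s) ∨ ∀ s ∈ Icc a b, φ'' s ≤ 0)
    (hφμ : ∀ s ∈ Icc a b, μ ≤ φ' s) {g g' : ℝ → ℝ} {M G : ℝ}
    (hgc : ContinuousOn g (Icc a b)) (hg'c : ContinuousOn g' (Icc a b))
    (hgM : ∀ s ∈ Icc a b, |g s| ≤ M) (hG : ∫ s in a..b, |g' s| ≤ G) :
    ∫ s in a..b, |(g' s * φ' s - g s * φ'' s) / φ' s ^ 2| ≤ (G + M) / μ := by
  have hpos : ∀ s ∈ Icc a b, 0 < φ' s := fun s hs => hμ.trans_le (hφμ s hs)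
  have hφ'c : ContinuousOn φ' (Icc a b) := fun s hs => (hφ' s hs).continuousAt.continuousWithinAt
  have hsq : ∀ s ∈ Icc a b, φ' s ^ 2 ≠ 0 := fun s hs => (pow_pos (hpos s hs) 2).ne'
  have hg'i : IntervalIntegrable (fun s => |g' s| / μ) volume a b :=
    (hg'c.abs.div_const μ).intervalIntegrable_of_Icc hab
  have hφ''i : IntervalIntegrable (fun s => M * (|φ'' s| / φ' s ^ 2)) volume a b :=
    ((hφ''c.abs.div (hφ'c.pow 2) hsq).const_smul M).intervalIntegrable_of_Icc hab
  calc ∫ s in a..b, |(g' s * φ' s - g s * φ'' s) / φ' s ^ 2|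
      ≤ ∫ s in a..b, (|g' s| / μ + M * (|φ'' s| / φ' s ^ 2)) := by
        refine integral_mono_on hab ((((hg'c.mul hφ'c).sub (hgc.mul hφ''c)).div (hφ'c.pow 2)
          hsq).abs.intervalIntegrable_of_Icc hab) (hg'i.add hφ''i) fun s hs => ?_
        calc |(g' s * φ' s - g s * φ'' s) / φ' s ^ 2|
            ≤ (|g' s| * φ' s + M * |φ'' s|) / φ' s ^ 2 := by
              rw [abs_div, abs_sq]
              gcongr
              refine (abs_sub _ _).trans ?_
              rw [abs_mul, abs_mul, abs_of_pos (hpos s hs)]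
              gcongr
              exact hgM s hs
          _ = |g' s| / φ' s + M * (|φ'' s| / φ' s ^ 2) := by
              field_simp [(hpos s hs).ne']
          _ ≤ |g' s| / μ + M * (|φ'' s| / φ' s ^ 2) := by
              gcongr
              exact hφμ s hs
    _ = (∫ s in a..b, |g' s|) / μ + M * ∫ s in a..b, |φ'' s| / φ' s ^ 2 := by
        rw [integral_add hg'i hφ''i, intervalIntegral.integral_div,
          intervalIntegral.integral_const_mul]
    _ ≤ G / μ + M * (1 / μ) := by
        have hM : 0 ≤ M := (abs_nonneg _).trans (hgM a ⟨le_rfl, hab⟩)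
        gcongr
        exact integral_abs_deriv_div_sq_le hab hμ hφ' hφ''c hsign hφμ
    _ = (G + M) / μ := by ring

lemma abs_integral_sin_mul_le (hab : a ≤ b) (hμ : 0 < μ)
    (hφ : ∀ s ∈ Icc a b, HasDerivAt φ (φ' s) s)
    (hφ' : ∀ s ∈ Icc a b, HasDerivAt φ' (φ'' s) s) (hφ''c : ContinuousOn φ'' (Icc a b))
    (hsign : (∀ s ∈ Icc a b, 0 ≤ φ'' s) ∨ ∀ s ∈ Icc a b, φ'' s ≤ 0)
    (hφμ : ∀ s ∈ Icc a b, μ ≤ φ' s) {g g' : ℝ → ℝ} {M G : ℝ}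
    (hg : ∀ s ∈ Icc a b, HasDerivAt g (g' s) s) (hg'c : ContinuousOn g' (Icc a b))
    (hgM : ∀ s ∈ Icc a b, |g s| ≤ M) (hG : ∫ s in a..b, |g' s| ≤ G) :
    |∫ s in a..b, sin (φ s) * g s| ≤ (3 * M + G) / μ := by
  have hpos : ∀ s ∈ Icc a b, 0 < φ' s := fun s hs => hμ.trans_le (hφμ s hs)
  have hφc : ContinuousOn φ (Icc a b) := fun s hs => (hφ s hs).continuousAt.continuousWithinAt
  have hφ'c : ContinuousOn φ' (Icc a b) := fun s hs => (hφ' s hs).continuousAt.continuousWithinAt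
  have hgc : ContinuousOn g (Icc a b) := fun s hs => (hg s hs).continuousAt.continuousWithinAt
  set v := fun s => g s / φ' s
  set v' := fun s => (g' s * φ' s - g s * φ'' s) / φ' s ^ 2
  have hv'c : ContinuousOn v' (Icc a b) := ((hg'c.mul hφ'c).sub (hgc.mul hφ''c)).div
    (hφ'c.pow 2) fun s hs => (pow_pos (hpos s hs) 2).ne'
  -- integrate `v = g / φ'` against `sin φ * φ' = (-cos φ)'`
  have hibp : ∫ s in a..b, sin (φ s) * g s =
      v b * -cos (φ b) - v a * -cos (φ a) - ∫ s in a..b, v' s * -cos (φ s) := by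
    rw [← integral_mul_deriv_eq_deriv_mul (u := v) (u' := v') (v := fun s => -cos (φ s))
      (v' := fun s => sin (φ s) * φ' s)
      (fun s hs => (hg s (uIcc_of_le hab ▸ hs)).div (hφ' s (uIcc_of_le hab ▸ hs))
        (hpos s (uIcc_of_le hab ▸ hs)).ne')
      (fun s hs => ((hφ s (uIcc_of_le hab ▸ hs)).cos.fun_neg).congr_deriv (by ring))
      (hv'c.intervalIntegrable_of_Icc hab)
      (((continuous_sin.comp_continuousOn hφc).mul hφ'c).intervalIntegrable_of_Icc hab)]
    refine integral_congr fun s hs => ?_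
    have hs' := (hpos s (uIcc_of_le hab ▸ hs)).ne'
    simp only [v]
    field_simp
  have hbdry : ∀ s ∈ Icc a b, |v s * -cos (φ s)| ≤ M / μ := fun s hs => by
    have hM : 0 ≤ M := (abs_nonneg _).trans (hgM a ⟨le_rfl, hab⟩)
    rw [abs_mul, abs_neg]
    refine (mul_le_of_le_one_right (abs_nonneg _) (abs_cos_le_one _)).trans ?_
    rw [abs_div, abs_of_pos (hpos s hs)]
    exact div_le_div₀ hM (hgM s hs) hμ (hφμ s hs)
  have hrest : |∫ s in a..b, v' s * -cos (φ s)| ≤ (G + M) / μ := by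
    rw [← Real.norm_eq_abs]
    refine (norm_integral_le_of_norm_le hab (ae_of_all _ fun s _ => ?_)
      (hv'c.abs.intervalIntegrable_of_Icc hab)).trans
      (integral_abs_deriv_div_le hab hμ hφ' hφ''c hsign hφμ hgc hg'c hgM hG)
    rw [Real.norm_eq_abs, abs_mul, abs_neg]
    exact mul_le_of_le_one_right (abs_nonneg _) (abs_cos_le_one _)
  rw [hibp]
  calc _ ≤ |v b * -cos (φ b)| + |v a * -cos (φ a)| + |∫ s in a..b, v' s * -cos (φ s)| :=
        (abs_sub _ _).trans (by gcongr; exact abs_sub _ _)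
    _ ≤ M / μ + M / μ + (G + M) / μ :=
        add_le_add (add_le_add (hbdry b ⟨hab, le_rfl⟩) (hbdry a ⟨le_rfl, hab⟩)) hrest
    _ = (3 * M + G) / μ := by ring

lemma abs_integral_sin_mul_div_le (ha : 0 < a) (hab : a ≤ b) (hμ : 0 < μ)
    (hφ : ∀ s ∈ Icc a b, HasDerivAt φ (φ' s) s)
    (hφ' : ∀ s ∈ Icc a b, HasDerivAt φ' (φ'' s) s) (hφ''c : ContinuousOn φ'' (Icc a b))
    (hsign : (∀ s ∈ Icc a b, 0 ≤ φ'' s) ∨ ∀ s ∈ Icc a b, φ'' s ≤ 0)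
    (hφμ : ∀ s ∈ Icc a b, μ ≤ φ' s) {u u' : ℝ → ℝ} {W : ℝ}
    (hu : ∀ s ∈ Icc a b, HasDerivAt u (u' s) s) (hu'c : ContinuousOn u' (Icc a b))
    (hu1 : ∀ s ∈ Icc a b, |u s| ≤ 1) (hu' : ∀ s ∈ Icc a b, |u' s| ≤ W / s) :
    |∫ s in a..b, sin (φ s) * (u s / s)| ≤ (W + 4) / (μ * a) := by
  have hpos : ∀ s ∈ Icc a b, 0 < s := fun s hs => ha.trans_le hs.1
  have hW : 0 ≤ W := nonneg_of_abs_le_div ha (hu' a ⟨le_rfl, hab⟩)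
  have huc : ContinuousOn u (Icc a b) := fun s hs => (hu s hs).continuousAt.continuousWithinAt
  have hsq : ∀ s ∈ Icc a b, s ^ 2 ≠ 0 := fun s hs => (pow_pos (hpos s hs) 2).ne'
  set g' := fun s => (u' s * s - u s * 1) / s ^ 2
  have hg'c : ContinuousOn g' (Icc a b) :=
    ((hu'c.mul continuousOn_id).sub (huc.mul continuousOn_const)).div (continuousOn_id.pow 2) hsq
  have hg'le : ∀ s ∈ Icc a b, |g' s| ≤ (W + 1) * (s ^ 2)⁻¹ := fun s hs => by
    rw [abs_div, abs_sq, ← div_eq_mul_inv]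
    gcongr
    refine (abs_sub _ _).trans (add_le_add ?_ ?_)
    · rw [abs_mul, abs_of_pos (hpos s hs), ← le_div_iff₀ (hpos s hs)]
      exact hu' s hs
    · simpa only [mul_one] using hu1 s hs
  have hG : ∫ s in a..b, |g' s| ≤ (W + 1) * a⁻¹ := by
    refine (integral_mono_on (g := fun s => (W + 1) * (s ^ 2)⁻¹) hab
      (hg'c.abs.intervalIntegrable_of_Icc hab)
      (((continuousOn_id.pow 2).inv₀ hsq).const_smul (W + 1) |>.intervalIntegrable_of_Icc hab)
      hg'le).trans ?_
    rw [intervalIntegral.integral_const_mul]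
    gcongr
    exact integral_inv_sq_le ha hab
  refine (abs_integral_sin_mul_le (g := fun s => u s / s) (M := a⁻¹) hab hμ hφ hφ' hφ''c hsign
    hφμ (fun s hs => (hu s hs).div (hasDerivAt_id' s) (hpos s hs).ne') hg'c
    (fun s hs => ?_) hG).trans_eq ?_
  · rw [abs_div, abs_of_pos (hpos s hs), ← one_div]
    exact div_le_div₀ zero_le_one (hu1 s hs) ha hs.1
  · field_simp
    ring

lemma abs_integral_sin_add_div_le (ha : 0 < a) (hab : a ≤ b) (hμ : 0 < μ)
    (hφ : ∀ s ∈ Icc a b, HasDerivAt φ (φ' s) s)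
    (hφ' : ∀ s ∈ Icc a b, HasDerivAt φ' (φ'' s) s) (hφ''c : ContinuousOn φ'' (Icc a b))
    (hsign : (∀ s ∈ Icc a b, 0 ≤ φ'' s) ∨ ∀ s ∈ Icc a b, φ'' s ≤ 0)
    (hφμ : ∀ s ∈ Icc a b, μ ≤ φ' s) {w w' : ℝ → ℝ} {W : ℝ}
    (hw : ∀ s ∈ Icc a b, HasDerivAt w (w' s) s) (hw'c : ContinuousOn w' (Icc a b))
    (hw' : ∀ s ∈ Icc a b, |w' s| ≤ W / s) :
    |∫ s in a..b, sin (φ s + w s) / s| ≤ 2 * (W + 4) / (μ * a) := by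
  have hpos : ∀ s ∈ Icc a b, s ≠ 0 := fun s hs => (ha.trans_le hs.1).ne'
  have hφc : ContinuousOn φ (Icc a b) := fun s hs => (hφ s hs).continuousAt.continuousWithinAt
  have hwc : ContinuousOn w (Icc a b) := fun s hs => (hw s hs).continuousAt.continuousWithinAt
  have hsplit : ∫ s in a..b, sin (φ s + w s) / s = (∫ s in a..b, sin (φ s) * (cos (w s) / s)) +
      ∫ s in a..b, sin (φ s + π / 2) * (sin (w s) / s) := by
    rw [← intervalIntegral.integral_add]
    · refine integral_congr fun s _ => ?_
      rw [sin_add, sin_add_pi_div_two]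
      ring
    · exact ((continuous_sin.comp_continuousOn hφc).mul ((continuous_cos.comp_continuousOn
        hwc).div continuousOn_id hpos)).intervalIntegrable_of_Icc hab
    · exact ((continuous_sin.comp_continuousOn (hφc.add continuousOn_const)).mul
        ((continuous_sin.comp_continuousOn hwc).div continuousOn_id hpos)).intervalIntegrable_of_Icc
        hab
  have hcos := abs_integral_sin_mul_div_le ha hab hμ hφ hφ' hφ''c hsign hφμ
    (fun s hs => (hw s hs).cos) ((continuous_sin.comp_continuousOn hwc).neg.mul hw'c)
    (fun s _ => abs_cos_le_one _) fun s hs => by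
      rw [abs_mul, abs_neg]
      exact (mul_le_of_le_one_left (abs_nonneg _) (abs_sin_le_one _)).trans (hw' s hs)
  have hsin := abs_integral_sin_mul_div_le ha hab hμ (fun s hs => (hφ s hs).add_const (π / 2))
    hφ' hφ''c hsign hφμ (fun s hs => (hw s hs).sin)
    ((continuous_cos.comp_continuousOn hwc).mul hw'c) (fun s _ => abs_sin_le_one _) fun s hs => by
      rw [abs_mul]
      exact (mul_le_of_le_one_left (abs_nonneg _) (abs_cos_le_one _)).trans (hw' s hs)
  rw [hsplit]
  calc _ ≤ (W + 4) / (μ * a) + (W + 4) / (μ * a) := (abs_add_le _ _).trans (add_le_add hcos hsin)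
    _ = 2 * (W + 4) / (μ * a) := by ring

lemma abs_integral_sin_add_div_le_of_deriv_le_neg (ha : 0 < a) (hab : a ≤ b) (hμ : 0 < μ)
    (hφ : ∀ s ∈ Icc a b, HasDerivAt φ (φ' s) s)
    (hφ' : ∀ s ∈ Icc a b, HasDerivAt φ' (φ'' s) s) (hφ''c : ContinuousOn φ'' (Icc a b))
    (hsign : (∀ s ∈ Icc a b, 0 ≤ φ'' s) ∨ ∀ s ∈ Icc a b, φ'' s ≤ 0)
    (hφμ : ∀ s ∈ Icc a b, φ' s ≤ -μ) {w w' : ℝ → ℝ} {W : ℝ}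
    (hw : ∀ s ∈ Icc a b, HasDerivAt w (w' s) s) (hw'c : ContinuousOn w' (Icc a b))
    (hw' : ∀ s ∈ Icc a b, |w' s| ≤ W / s) :
    |∫ s in a..b, sin (φ s + w s) / s| ≤ 2 * (W + 4) / (μ * a) := by
  have hneg := abs_integral_sin_add_div_le (φ := fun s => -φ s) (w := fun s => -w s) ha hab hμ
    (fun s hs => (hφ s hs).neg) (fun s hs => (hφ' s hs).neg) hφ''c.neg
    (hsign.symm.imp (fun h s hs => neg_nonneg.2 (h s hs)) fun h s hs => neg_nonpos.2 (h s hs))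
    (fun s hs => le_neg_of_le_neg (hφμ s hs))
    (fun s hs => (hw s hs).neg) hw'c.neg fun s hs => (abs_neg (w' s)).trans_le (hw' s hs)
  simpa only [← neg_add, sin_neg, neg_div, intervalIntegral.integral_neg, abs_neg] using hneg

lemma abs_integral_sin_add_div_le_of_convex (ha : 0 < a) (hab : a ≤ b) (hμ : 0 < μ)
    {c₁ c₂ : ℝ} (hc₁ : 0 < c₁) (hc : c₁ ≤ c₂)
    (hφ : ∀ s ∈ Icc a b, HasDerivAt φ (φ' s) s)
    (hφ' : ∀ s ∈ Icc a b, HasDerivAt φ' (φ'' s) s) (hφ''c : ContinuousOn φ'' (Icc a b))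
    (hφ''0 : ∀ s ∈ Icc a b, 0 ≤ φ'' s)
    (hφ₁ : ∀ s ∈ Icc a b, s ≤ c₁ → φ' s ≤ -μ) (hφ₂ : ∀ s ∈ Icc a b, c₂ ≤ s → μ ≤ φ' s)
    {w w' : ℝ → ℝ} {W : ℝ}
    (hw : ∀ s ∈ Icc a b, HasDerivAt w (w' s) s) (hw'c : ContinuousOn w' (Icc a b))
    (hw' : ∀ s ∈ Icc a b, |w' s| ≤ W / s) :
    |∫ s in a..b, sin (φ s + w s) / s| ≤ 4 * (W + 4) / (μ * a) + log (c₂ / c₁) := by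
  have hW : 0 ≤ W := nonneg_of_abs_le_div ha (hw' a ⟨le_rfl, hab⟩)
  have hφc : ContinuousOn φ (Icc a b) := fun s hs => (hφ s hs).continuousAt.continuousWithinAt
  have hwc : ContinuousOn w (Icc a b) := fun s hs => (hw s hs).continuousAt.continuousWithinAt
  refine (abs_integral_le_of_three_regions (B₁ := 2 * (W + 4) / (μ * a)) (B₂ := log (c₂ / c₁))
    (B₃ := 2 * (W + 4) / (μ * a)) hab hc ?_ (by positivity)
    (log_nonneg ((one_le_div hc₁).2 hc)) (by positivity) ?_ ?_ ?_).trans_eq (by ring)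
  · exact ((continuous_sin.comp_continuousOn (hφc.add hwc)).div continuousOn_id
      fun s hs => (ha.trans_le hs.1).ne').intervalIntegrable_of_Icc hab
  · intro y hay hyb hyc
    have hI : Icc a y ⊆ Icc a b := Icc_subset_Icc le_rfl hyb
    exact abs_integral_sin_add_div_le_of_deriv_le_neg ha hay.le hμ (fun s hs => hφ s (hI hs))
      (fun s hs => hφ' s (hI hs)) (hφ''c.mono hI) (.inl fun s hs => hφ''0 s (hI hs))
      (fun s hs => hφ₁ s (hI hs) (hs.2.trans hyc)) (fun s hs => hw s (hI hs)) (hw'c.mono hI)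
      fun s hs => hw' s (hI hs)
  · intro x y hax hxy _ hcx hyc
    have hx : 0 < x := ha.trans_le hax
    calc |∫ s in x..y, sin (φ s + w s) / s| ≤ ∫ s in x..y, s⁻¹ := by
          rw [← Real.norm_eq_abs]
          refine norm_integral_le_of_norm_le hxy.le (ae_of_all _ fun s hs => ?_)
            (intervalIntegrable_inv (fun s hs => ?_) continuousOn_id)
          · rw [Real.norm_eq_abs, abs_div, abs_of_pos (hx.trans hs.1), ← one_div]
            exact div_le_div_of_nonneg_right (abs_sin_le_one _) (hx.trans hs.1).le
          · exact (hx.trans_le (uIcc_of_le hxy.le ▸ hs).1).ne'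
      _ = log (y / x) := integral_inv_of_pos hx (hx.trans hxy)
      _ ≤ log (c₂ / c₁) :=
          log_le_log (div_pos (hx.trans hxy) hx) (div_le_div₀ (hc₁.le.trans hc) hyc hc₁ hcx)
  · intro x hax hxb hcx
    have hI : Icc x b ⊆ Icc a b := Icc_subset_Icc hax le_rfl
    refine (abs_integral_sin_add_div_le (ha.trans_le hax) hxb.le hμ (fun s hs => hφ s (hI hs))
      (fun s hs => hφ' s (hI hs)) (hφ''c.mono hI) (.inl fun s hs => hφ''0 s (hI hs))
      (fun s hs => hφ₂ s (hI hs) (hcx.trans hs.1)) (fun s hs => hw s (hI hs)) (hw'c.mono hI)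
      fun s hs => hw' s (hI hs)).trans ?_
    gcongr

end FirstDerivativeTest

section PowerPhase

variable {α : ℝ}

lemma hasDerivAt_rpow_add_mul (α κ : ℝ) {s : ℝ} (hs : 0 < s) :
    HasDerivAt (fun x => x ^ α + κ * x) (α * s ^ (α - 1) + κ) s := by
  simpa using (hasDerivAt_rpow_const (p := α) (Or.inl hs.ne')).fun_add
    ((hasDerivAt_id' s).const_mul κ)

lemma hasDerivAt_mul_rpow_sub_one_add (α κ : ℝ) {s : ℝ} (hs : 0 < s) :
    HasDerivAt (fun x => α * x ^ (α - 1) + κ) (α * (α - 1) * s ^ (α - 2)) s := by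
  refine (((hasDerivAt_rpow_const (p := α - 1) (Or.inl hs.ne')).const_mul α).add_const
    κ).congr_deriv ?_
  rw [sub_sub, one_add_one_eq_two, mul_assoc]

lemma continuousOn_const_mul_rpow (c β : ℝ) {a b : ℝ} (ha : 0 < a) :
    ContinuousOn (fun s => c * s ^ β) (Icc a b) := fun s hs =>
  (continuousAt_const.mul
    (continuousAt_rpow_const s β (Or.inl (ha.trans_le hs.1).ne'))).continuousWithinAt

lemma mul_rpow_sub_one_le_iff (hα : 1 < α) {A s : ℝ} (hA : 0 ≤ A) (hs : 0 ≤ s) :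
    α * s ^ (α - 1) ≤ A ↔ s ≤ (A / α) ^ (α - 1)⁻¹ := by
  rw [le_rpow_inv_iff_of_pos hs (div_nonneg hA (by linarith)) (by linarith),
    le_div_iff₀' (by linarith)]

lemma le_mul_rpow_sub_one_iff (hα : 1 < α) {A s : ℝ} (hA : 0 ≤ A) (hs : 0 ≤ s) :
    A ≤ α * s ^ (α - 1) ↔ (A / α) ^ (α - 1)⁻¹ ≤ s := by
  rw [rpow_inv_le_iff_of_pos (div_nonneg hA (by linarith)) hs (by linarith),
    div_le_iff₀' (by linarith)]

variable {a b : ℝ} {w w' : ℝ → ℝ} {W : ℝ}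

lemma abs_integral_sin_rpow_add_div_le (hα : 0 ≤ α) {κ : ℝ} (hκ : 0 < κ) (ha : 0 < a)
    (hab : a ≤ b) (hw : ∀ s ∈ Icc a b, HasDerivAt w (w' s) s) (hw'c : ContinuousOn w' (Icc a b))
    (hw' : ∀ s ∈ Icc a b, |w' s| ≤ W / s) :
    |∫ s in a..b, sin (s ^ α + (κ * s + w s)) / s| ≤ 2 * (W + 4) / (κ * a) := by
  have hpos : ∀ s ∈ Icc a b, 0 < s := fun s hs => ha.trans_le hs.1
  simpa only [add_assoc] using abs_integral_sin_add_div_le ha hab hκ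
    (fun s hs => hasDerivAt_rpow_add_mul α κ (hpos s hs))
    (fun s hs => hasDerivAt_mul_rpow_sub_one_add α κ (hpos s hs))
    (continuousOn_const_mul_rpow _ _ ha)
    ((le_total 0 (α * (α - 1))).imp (fun h s hs => mul_nonneg h (rpow_nonneg (hpos s hs).le _))
      fun h s hs => mul_nonpos_of_nonpos_of_nonneg h (rpow_nonneg (hpos s hs).le _))
    (fun s hs => le_add_of_nonneg_left (mul_nonneg hα (rpow_nonneg (hpos s hs).le _)))
    hw hw'c hw'

lemma abs_integral_sin_rpow_sub_div_le (hα : 1 < α) {μ : ℝ} (hμ : 0 < μ) (ha : 0 < a)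
    (hab : a ≤ b) (hw : ∀ s ∈ Icc a b, HasDerivAt w (w' s) s) (hw'c : ContinuousOn w' (Icc a b))
    (hw' : ∀ s ∈ Icc a b, |w' s| ≤ W / s) :
    |∫ s in a..b, sin (s ^ α - (2 * μ * s + w s)) / s| ≤
      4 * (W + 4) / (μ * a) + log 3 / (α - 1) := by
  have hα₀ : 0 < α := by linarith
  have hpos : ∀ s ∈ Icc a b, 0 < s := fun s hs => ha.trans_le hs.1
  -- `s ^ α - 2μs` has derivative `≤ -μ` below `c₁` and `≥ μ` above `c₂`
  set c₁ := (μ / α) ^ (α - 1)⁻¹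
  set c₂ := (3 * μ / α) ^ (α - 1)⁻¹
  have hlog : log (c₂ / c₁) = log 3 / (α - 1) := by
    rw [← div_rpow (by positivity) (by positivity), show 3 * μ / α / (μ / α) = 3 by field_simp,
      log_rpow three_pos, inv_mul_eq_div]
  have key := abs_integral_sin_add_div_le_of_convex (φ := fun s => s ^ α + -(2 * μ) * s)
    (w := fun s => -w s) ha hab hμ (c₁ := c₁) (c₂ := c₂) (by positivity)
    (rpow_le_rpow (by positivity) (by gcongr; linarith) (inv_nonneg.2 (by linarith)))
    (fun s hs => hasDerivAt_rpow_add_mul α _ (hpos s hs))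
    (fun s hs => hasDerivAt_mul_rpow_sub_one_add α _ (hpos s hs))
    (continuousOn_const_mul_rpow _ _ ha)
    (fun s hs => mul_nonneg (mul_nonneg hα₀.le (by linarith)) (rpow_nonneg (hpos s hs).le _))
    (fun s hs hsc => by
      have := (mul_rpow_sub_one_le_iff hα hμ.le (hpos s hs).le).2 hsc
      linarith)
    (fun s hs hsc => by
      have := (le_mul_rpow_sub_one_iff hα (by positivity) (hpos s hs).le).2 hsc
      linarith)
    (fun s hs => (hw s hs).neg) hw'c.neg fun s hs => (abs_neg (w' s)).trans_le (hw' s hs)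
  rw [hlog] at key
  convert key using 6 with s
  ring

end PowerPhase

lemma integral_sin_mul_cos_div_eq {a b : ℝ} {x y : ℝ → ℝ} (ha : 0 < a) (hab : a ≤ b)
    (hx : ContinuousOn x (Icc a b)) (hy : ContinuousOn y (Icc a b)) :
    ∫ s in a..b, sin (x s) * cos (y s) / s =
      ((∫ s in a..b, sin (x s + y s) / s) + ∫ s in a..b, sin (x s - y s) / s) / 2 := by
  have hs : ∀ s ∈ Icc a b, s ≠ 0 := fun s hs => (ha.trans_le hs.1).ne'
  rw [← intervalIntegral.integral_add, ← intervalIntegral.integral_div]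
  · refine integral_congr fun s _ => ?_
    rw [← add_div, add_comm, ← two_mul_sin_mul_cos]
    ring
  · exact ((continuous_sin.comp_continuousOn (hx.add hy)).div continuousOn_id
      hs).intervalIntegrable_of_Icc hab
  · exact ((continuous_sin.comp_continuousOn (hx.sub hy)).div continuousOn_id
      hs).intervalIntegrable_of_Icc hab

theorem osc_int_salpha_bound_general
    (H0 lam t0 α : ℝ) (hlam : 0 < lam) (ht0 : 0 < t0) (hα : 1 < α)
    (h h' : ℝ → ℝ)
    (hhd : ∀ t ∈ Ici t0, HasDerivAt h (h' t) t)
    (hh'c : ContinuousOn h' (Ici t0))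
    (hh' : ∀ t ∈ Ici t0, |h' t| ≤ H0 / t) :
    ∀ t ∈ Ici t0,
      |∫ s in t0..t, Real.sin (s ^ α) * Real.cos (2 * lam * s + 2 * h s) / s| ≤
        5 * (H0 + 2) / (lam * t0) + Real.log 3 / (α - 1) := by
  intro t ht
  have hI : Icc t0 t ⊆ Ici t0 := Icc_subset_Ici_self
  have hw : ∀ s ∈ Icc t0 t, HasDerivAt (fun x => 2 * h x) (2 * h' s) s := fun s hs =>
    (hhd s (hI hs)).const_mul 2
  have hw'c : ContinuousOn (fun s => 2 * h' s) (Icc t0 t) := continuousOn_const.mul (hh'c.mono hI)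
  have hw' : ∀ s ∈ Icc t0 t, |2 * h' s| ≤ 2 * H0 / s := fun s hs => by
    rw [abs_mul, abs_two, mul_div_assoc]
    exact mul_le_mul_of_nonneg_left (hh' s (hI hs)) zero_le_two
  have hplus := abs_integral_sin_rpow_add_div_le (κ := 2 * lam) (by linarith) (by positivity)
    ht0 ht hw hw'c hw'
  have hminus := abs_integral_sin_rpow_sub_div_le hα hlam ht0 ht hw hw'c hw'
  have hlog : 0 ≤ log 3 / (α - 1) := div_nonneg (log_nonneg (by norm_num)) (by linarith)
  rw [integral_sin_mul_cos_div_eq (x := fun s => s ^ α) (y := fun s => 2 * lam * s + 2 * h s) ht0 ht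
    (continuousOn_id.rpow_const fun s hs => .inl (ht0.trans_le hs.1).ne')
    ((continuousOn_const.mul continuousOn_id).add fun s hs =>
      (hw s hs).continuousAt.continuousWithinAt)]
  calc _ ≤ (2 * (2 * H0 + 4) / (2 * lam * t0) +
        (4 * (2 * H0 + 4) / (lam * t0) + log 3 / (α - 1))) / 2 := by
        rw [abs_div, abs_two]
        gcongr
        exact (abs_add_le _ _).trans (add_le_add hplus hminus)
    _ = 5 * (H0 + 2) / (lam * t0) + log 3 / (α - 1) / 2 := by
        field_simp
        ring
    _ ≤ 5 * (H0 + 2) / (lam * t0) + log 3 / (α - 1) := by linarith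

theorem osc_int_salpha_bound
    (H0 lam t0 α : ℝ) (hH0 : 0 < H0) (hlam : 0 < lam) (ht0 : 0 < t0) (hα : 1 < α)
    (h h' : ℝ → ℝ)
    (hhd : ∀ t ∈ Ici t0, HasDerivAt h (h' t) t)
    (hh'c : ContinuousOn h' (Ici t0))
    (hh' : ∀ t ∈ Ici t0, |h' t| ≤ H0 / t) :
    ∀ t ∈ Ici t0,
      |∫ s in t0..t, Real.sin (s ^ α) * Real.cos (2 * lam * s + 2 * h s) / s| ≤
        5 * (H0 + 2) / (lam * t0) + Real.log 3 / (α - 1) :=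
  osc_int_salpha_bound_general H0 lam t0 α hlam ht0 hα h h' hhd hh'c hh'
end

section
/- Let t0 > 0 and α > 1 be real numbers. Then for every t ≥ t0 one has |∫_{t0}^t sin(s^α)/s ds| ≤ 3/(α·t0^α). -/
/-!
The substitution `x = s ^ α` turns the integral into
`α⁻¹ * ∫ x in t0 ^ α..t ^ α, sin x / x`.
Integrating by parts against `-cos`, a tail `∫ x in a..b, sin x / x` of the Dirichlet integral
is bounded by the boundary terms `1 / a + 1 / b` plus `∫ x in a..b, x⁻² = 1 / a - 1 / b`,
i.e. by `2 / a`.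
-/

open Real Set Filter MeasureTheory intervalIntegral

theorem continuousOn_inv_sq {s : Set ℝ} (hs : ∀ x ∈ s, x ≠ 0) :
    ContinuousOn (fun x : ℝ => (x ^ 2)⁻¹) s :=
  (continuousOn_id.pow 2).inv₀ fun x hx => pow_ne_zero 2 (hs x hx)

theorem integral_sin_div_eq_sub_integral_cos_div_sq {a b : ℝ} (ha : 0 < a) (hb : 0 < b) :
    ∫ x in a..b, sin x / x = cos a / a - cos b / b - ∫ x in a..b, cos x / x ^ 2 := by
  have hne : ∀ x ∈ uIcc a b, x ≠ 0 := fun x hx => (lt_min ha hb |>.trans_le hx.1).ne'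
  have parts := intervalIntegral.integral_mul_deriv_eq_deriv_mul
    (u := fun x => x⁻¹) (v := fun x => -cos x) (u' := fun x => -(x ^ 2)⁻¹) (v' := sin)
    (fun x hx => hasDerivAt_inv (hne x hx))
    (fun x _ => (hasDerivAt_cos x).neg.congr_deriv (neg_neg _))
    (continuousOn_inv_sq hne).neg.intervalIntegrable (continuous_sin.intervalIntegrable _ _)
  simp only [neg_mul_neg, inv_mul_eq_div] at parts
  rw [parts]
  ring

theorem abs_integral_cos_div_sq_le {a b : ℝ} (ha : 0 < a) (hab : a ≤ b) :
    |∫ x in a..b, cos x / x ^ 2| ≤ a⁻¹ - b⁻¹ := by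
  have hne : ∀ x ∈ uIcc a b, x ≠ 0 := fun x hx =>
    (lt_min ha (ha.trans_le hab) |>.trans_le hx.1).ne'
  have hint : ∫ x in a..b, (x ^ 2)⁻¹ = a⁻¹ - b⁻¹ := by
    rw [integral_eq_sub_of_hasDerivAt (f := fun x => -x⁻¹)
      (fun x hx => (hasDerivAt_inv (hne x hx)).neg.congr_deriv (neg_neg _))
      (continuousOn_inv_sq hne).intervalIntegrable]
    ring
  rw [← hint, ← Real.norm_eq_abs]
  refine norm_integral_le_of_norm_le hab (Eventually.of_forall fun x _ => ?_)
    (continuousOn_inv_sq hne).intervalIntegrable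
  rw [norm_div, norm_pow, Real.norm_eq_abs, Real.norm_eq_abs, sq_abs, div_eq_mul_inv]
  exact mul_le_of_le_one_left (by positivity) (abs_cos_le_one x)

theorem abs_integral_sin_div_le {a b : ℝ} (ha : 0 < a) (hab : a ≤ b) :
    |∫ x in a..b, sin x / x| ≤ 2 / a := by
  have hb : 0 < b := ha.trans_le hab
  have boundary : ∀ {x : ℝ}, 0 < x → |cos x / x| ≤ x⁻¹ := fun hx => by
    rw [abs_div, abs_of_pos hx, div_eq_mul_inv]
    exact mul_le_of_le_one_left (inv_pos.2 hx).le (abs_cos_le_one _)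
  rw [integral_sin_div_eq_sub_integral_cos_div_sq ha hb]
  calc |cos a / a - cos b / b - ∫ x in a..b, cos x / x ^ 2|
      ≤ |cos a / a| + |cos b / b| + |∫ x in a..b, cos x / x ^ 2| :=
        (abs_sub _ _).trans (add_le_add_left (abs_sub _ _) _)
    _ ≤ a⁻¹ + b⁻¹ + (a⁻¹ - b⁻¹) := by
      gcongr
      exacts [boundary ha, boundary hb, abs_integral_cos_div_sq_le ha hab]
    _ = 2 / a := by ring

theorem integral_sin_rpow_div {a b α : ℝ} (ha : 0 < a) (hb : 0 < b) (hα : α ≠ 0) :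
    ∫ s in a..b, sin (s ^ α) / s = α⁻¹ * ∫ x in a ^ α..b ^ α, sin x / x := by
  have hpos : ∀ s ∈ uIcc a b, 0 < s := fun s hs => lt_min ha hb |>.trans_le hs.1
  have subst := integral_comp_mul_deriv' (f := fun s => s ^ α) (f' := fun s => α * s ^ (α - 1))
    (g := fun x => sin x / x) (fun s hs => hasDerivAt_rpow_const (Or.inl (hpos s hs).ne'))
    (continuousOn_const.mul (continuousOn_id.rpow_const fun s hs => Or.inl (hpos s hs).ne'))
    (continuousOn_sin.div continuousOn_id (by
      rintro _ ⟨s, hs, rfl⟩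
      exact (rpow_pos_of_pos (hpos s hs) α).ne'))
  rw [← subst, ← intervalIntegral.integral_const_mul]
  refine integral_congr fun s hs => ?_
  have hs := hpos s hs
  simp only [Function.comp, rpow_sub hs, rpow_one]
  field_simp

theorem int_sin_salpha_bound (t0 α : ℝ) (ht0 : 0 < t0) (hα : 1 < α) :
    ∀ t ≥ t0, |∫ s in t0..t, Real.sin (s ^ α) / s| ≤ 3 / (α * t0 ^ α) := by
  intro t ht
  have hα0 : 0 < α := zero_lt_one.trans hα
  rw [integral_sin_rpow_div ht0 (ht0.trans_le ht) hα0.ne', abs_mul, abs_inv, abs_of_pos hα0]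
  calc α⁻¹ * |∫ x in t0 ^ α..t ^ α, sin x / x| ≤ α⁻¹ * (2 / t0 ^ α) := by
        gcongr
        exact abs_integral_sin_div_le (rpow_pos_of_pos ht0 α) (rpow_le_rpow ht0.le ht hα0.le)
    _ = 2 / (α * t0 ^ α) := by ring
    _ ≤ 3 / (α * t0 ^ α) := by gcongr; norm_num
end

section
/- Let m and t0 be positive real numbers, set μ := min{m, 2}, and for t ≥ t0 define γ(m,t0,t) := ∫_{t0}^t (t0/s)^m ds. Then for every t ≥ t0 one has (t0/t)² · γ(m,t0,t)² ≤ t0² · (t0/t)^μ. -/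
open Real Set Filter MeasureTheory intervalIntegral

/-!
With `c = μ / 2 ∈ (0, 1]`, the function `F s = (t₀ / s) ^ c * (s - t₀)` has derivative
`y ^ c * (1 - c + c * y)` where `y = t₀ / s ∈ (0, 1]`, and Bernoulli's inequality `y ^ c ≤ 1 - c + c * y`
shows that this dominates `y ^ μ = y ^ c * y ^ c`. Since also `y ^ m ≤ y ^ μ`, the integral `γ` is at
most `F t ≤ t * (t₀ / t) ^ c`; squaring and multiplying by `(t₀ / t) ^ 2` gives the estimate.
-/

lemma rpow_le_one_sub_add_mul {y c : ℝ} (hy : 0 ≤ y) (hc0 : 0 ≤ c) (hc1 : c ≤ 1) :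
    y ^ c ≤ 1 - c + c * y := by
  convert rpow_one_add_le_one_add_mul_self (s := y - 1) (by linarith) hc0 hc1 using 1 <;> ring_nf

lemma continuousOn_div_rpow {a : ℝ} (ha : a ≠ 0) (p : ℝ) :
    ContinuousOn (fun s : ℝ => (a / s) ^ p) (Ioi 0) :=
  (continuousOn_const.div continuousOn_id fun _ hs => (mem_Ioi.1 hs).ne').rpow_const
    fun _ hs => Or.inl (div_ne_zero ha (mem_Ioi.1 hs).ne')

lemma intervalIntegrable_div_rpow {a t : ℝ} (ha : 0 < a) (hat : a ≤ t) (p : ℝ) :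
    IntervalIntegrable (fun s : ℝ => (a / s) ^ p) volume a t :=
  ((continuousOn_div_rpow ha.ne' p).mono fun _ hs =>
    ha.trans_le (uIcc_of_le hat ▸ hs).1).intervalIntegrable

lemma integral_div_rpow_le_of_le {a t p q : ℝ} (ha : 0 < a) (hat : a ≤ t) (hpq : p ≤ q) :
    ∫ s in a..t, (a / s) ^ q ≤ ∫ s in a..t, (a / s) ^ p :=
  integral_mono_on hat (intervalIntegrable_div_rpow ha hat q) (intervalIntegrable_div_rpow ha hat p)
    fun _ hs => rpow_le_rpow_of_exponent_ge (div_pos ha (ha.trans_le hs.1))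
      (div_le_one_of_le₀ hs.1 (ha.trans_le hs.1).le) hpq

lemma hasDerivAt_div_rpow_mul_sub {a s : ℝ} (ha : 0 < a) (hs : 0 < s) (c : ℝ) :
    HasDerivAt (fun x => (a / x) ^ c * (x - a)) ((a / s) ^ c * (1 - c + c * (a / s))) s := by
  have hy : 0 < a / s := div_pos ha hs
  have hdiv : HasDerivAt (fun x => a / x) (-a / s ^ 2) s := by
    simpa [div_eq_mul_inv, neg_div] using (hasDerivAt_inv hs.ne').const_mul a
  refine ((hdiv.rpow_const (Or.inl hy.ne')).mul ((hasDerivAt_id s).sub_const a)).congr_deriv ?_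
  rw [rpow_sub_one hy.ne', id]
  field_simp
  ring

lemma integral_div_rpow_le {a t p : ℝ} (ha : 0 < a) (hat : a ≤ t) (hp0 : 0 ≤ p) (hp2 : p ≤ 2) :
    ∫ s in a..t, (a / s) ^ p ≤ (a / t) ^ (p / 2) * (t - a) := by
  have hpos : ∀ s ∈ Icc a t, 0 < s := fun s hs => ha.trans_le hs.1
  have hderiv : ∀ s ∈ Icc a t, HasDerivAt (fun x => (a / x) ^ (p / 2) * (x - a))
      ((a / s) ^ (p / 2) * (1 - p / 2 + p / 2 * (a / s))) s :=
    fun s hs => hasDerivAt_div_rpow_mul_sub ha (hpos s hs) (p / 2)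
  have hbound : ∀ s ∈ Ioo a t,
      (a / s) ^ p ≤ (a / s) ^ (p / 2) * (1 - p / 2 + p / 2 * (a / s)) := by
    intro s hs
    have hy : 0 < a / s := div_pos ha (hpos s (Ioo_subset_Icc_self hs))
    calc (a / s) ^ p = (a / s) ^ (p / 2) * (a / s) ^ (p / 2) := by
          rw [← rpow_add hy, add_halves]
      _ ≤ _ := mul_le_mul_of_nonneg_left (rpow_le_one_sub_add_mul hy.le (by linarith) (by linarith))
          (rpow_nonneg hy.le _)
  simpa using integral_le_sub_of_hasDeriv_right_of_le hat
    (fun s hs => (hderiv s hs).continuousAt.continuousWithinAt)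
    (fun s hs => (hderiv s (Ioo_subset_Icc_self hs)).hasDerivWithinAt)
    ((continuousOn_div_rpow ha.ne' p).mono hpos).integrableOn_Icc hbound

theorem gamma_estimate (m t0 : ℝ) (hm : 0 < m) (ht0 : 0 < t0) :
    ∀ t ≥ t0,
      (t0 / t) ^ 2 * (∫ s in t0..t, (t0 / s) ^ m) ^ 2 ≤
        t0 ^ 2 * (t0 / t) ^ (min m 2) := by
  intro t ht
  have hy : 0 < t0 / t := div_pos ht0 (ht0.trans_le ht)
  have hγ_nonneg : 0 ≤ ∫ s in t0..t, (t0 / s) ^ m :=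
    integral_nonneg ht fun s hs => rpow_nonneg (div_nonneg ht0.le (ht0.trans_le hs.1).le) m
  have hγ_le : ∫ s in t0..t, (t0 / s) ^ m ≤ t * (t0 / t) ^ (min m 2 / 2) :=
    calc ∫ s in t0..t, (t0 / s) ^ m ≤ ∫ s in t0..t, (t0 / s) ^ min m 2 :=
          integral_div_rpow_le_of_le ht0 ht (min_le_left m 2)
      _ ≤ (t0 / t) ^ (min m 2 / 2) * (t - t0) :=
          integral_div_rpow_le ht0 ht (le_min hm.le zero_le_two) (min_le_right m 2)
      _ ≤ t * (t0 / t) ^ (min m 2 / 2) := by nlinarith [rpow_nonneg hy.le (min m 2 / 2)]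
  calc (t0 / t) ^ 2 * (∫ s in t0..t, (t0 / s) ^ m) ^ 2
      ≤ (t0 / t) ^ 2 * (t * (t0 / t) ^ (min m 2 / 2)) ^ 2 := by gcongr
    _ = (t0 / t * t) ^ 2 * ((t0 / t) ^ (min m 2 / 2) * (t0 / t) ^ (min m 2 / 2)) := by ring
    _ = t0 ^ 2 * (t0 / t) ^ min m 2 := by
        rw [div_mul_cancel₀ t0 (ht0.trans_le ht).ne', ← rpow_add hy, add_halves]
end

section
/- Let t0 > 0, let b : [t0,∞) → ℝ be continuous, let λ > 0, and let u be a solution of the damped oscillator equation u'' + b(t)u' + λ²u = 0 on [t0,∞) with u(t0)² + u'(t0)² > 0. Then there exist functions ρ : [t0,∞) → (0,+∞) and θ : [t0,∞) → ℝ of class C¹ such that: (a) u(t) = (1/λ)ρ(t)cos(θ(t)) and u'(t) = −ρ(t)sin(θ(t)) for every t ≥ t0; (b) ρ'(t) = −ρ(t)·b(t)·sin²(θ(t)) and θ'(t) = λ − (1/2)b(t)·sin(2θ(t)) for every t ≥ t0; (c) the function h(t) := θ(t) − λt satisfies |h'(t)| ≤ (1/2)|b(t)| for every t ≥ t0; (d)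 u'(t)² + λ²u(t)² = (u'(t0)² + λ²u(t0)²)·exp(−2∫_{t0}^t b(s)sin²(θ(s)) ds) for every t ≥ t0. -/
/-!
The phasor `w = λu - iu'` satisfies `w' = i(λw + bu')`. Its squared modulus, the energy
`E = u'² + λ²u²`, satisfies `E' = -2bu'² ≥ -2|b|E`, so `E · exp (∫ 2|b|)` is nondecreasing
and `w` never vanishes. Hence `w` has a `C¹` logarithm `L = log w(t₀) + ∫ w'/w`, and
`ρ = e^{Re L}`, `θ = Im L` give `w = ρe^{iθ}`. Writing `u' = -Im w` in `w'/w` yields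
`w'/w = -b sin²θ + i(λ - ½ b sin 2θ)`, which is (b); (c) follows, and (d) is
`|w|² = e^{2 Re L}`.
-/

open Real Set Filter MeasureTheory intervalIntegral

theorem ContinuousOn.continuous_comp_max {E : Type*} [TopologicalSpace E] {f : ℝ → E} {a : ℝ}
    (hf : ContinuousOn f (Ici a)) : Continuous fun t => f (max t a) :=
  hf.comp_continuous (continuous_id.max continuous_const) fun t => le_max_right t a

theorem ContinuousOn.hasDerivAt_integral_comp_max {E : Type*} [NormedAddCommGroup E]
    [NormedSpace ℝ E] [CompleteSpace E] {f : ℝ → E} {a t : ℝ} (hf : ContinuousOn f (Ici a))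
    (ht : t ∈ Ici a) :
    HasDerivAt (fun x => ∫ s in a..x, f (max s a)) (f t) t := by
  -- `f (max s a)` extends `f` continuously to the left of `a`, so the primitive is
  -- differentiable at `a` itself
  simpa only [max_eq_left (mem_Ici.mp ht)] using
    (hf.continuous_comp_max.integral_hasStrictDerivAt a t).hasDerivAt

theorem eq_of_hasDerivAt_zero_Ici {E : Type*} [NormedAddCommGroup E] [NormedSpace ℝ E]
    {f : ℝ → E} {a t : ℝ} (hf : ∀ x ∈ Ici a, HasDerivAt f 0 x) (ht : t ∈ Ici a) :
    f t = f a :=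
  constant_of_has_deriv_right_zero (fun x hx => (hf x hx.1).continuousAt.continuousWithinAt)
    (fun x hx => (hf x hx.1).hasDerivWithinAt) t ⟨ht, le_rfl⟩

theorem pos_of_neg_mul_le_deriv {f f' k : ℝ → ℝ} {a t : ℝ} (hk : ContinuousOn k (Ici a))
    (hf : ∀ x ∈ Ici a, HasDerivAt f (f' x) x) (hf' : ∀ x ∈ Ici a, -(k x * f x) ≤ f' x)
    (ha : 0 < f a) (ht : t ∈ Ici a) : 0 < f t := by
  set K : ℝ → ℝ := fun x => ∫ s in a..x, k (max s a)
  have hF : ∀ x ∈ Ici a,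
      HasDerivAt (fun s => f s * exp (K s)) ((f' x + k x * f x) * exp (K x)) x := fun x hx =>
    ((hf x hx).mul (hk.hasDerivAt_integral_comp_max hx).exp).congr_deriv (by ring)
  have hmono : MonotoneOn (fun s => f s * exp (K s)) (Ici a) :=
    monotoneOn_of_hasDerivWithinAt_nonneg (convex_Ici a)
      (fun x hx => (hF x hx).continuousAt.continuousWithinAt)
      (fun x hx => (hF x (interior_subset hx)).hasDerivWithinAt)
      (fun x hx => mul_nonneg (by linarith [hf' x (interior_subset hx)]) (exp_pos _).le)
  have hle : f a ≤ f t * exp (K t) := by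
    simpa [K] using hmono self_mem_Ici ht ht
  exact pos_of_mul_pos_left (ha.trans_le hle) (exp_pos _).le

theorem exists_hasDerivAt_cexp_eq {w w' : ℝ → ℂ} {a : ℝ}
    (hw : ∀ t ∈ Ici a, HasDerivAt w (w' t) t) (hw0 : ∀ t ∈ Ici a, w t ≠ 0)
    (hw' : ContinuousOn w' (Ici a)) :
    ∃ L : ℝ → ℂ, ∀ t ∈ Ici a,
      HasDerivAt L (w' t / w t) t ∧ Complex.exp (L t) = w t := by
  have hq : ContinuousOn (fun t => w' t / w t) (Ici a) :=
    hw'.div (fun t ht => (hw t ht).continuousAt.continuousWithinAt) hw0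
  set L : ℝ → ℂ := fun t => Complex.log (w a) + ∫ s in a..t, w' (max s a) / w (max s a)
  have hL : ∀ t ∈ Ici a, HasDerivAt L (w' t / w t) t := fun t ht =>
    (hq.hasDerivAt_integral_comp_max ht).const_add _
  have hconst : ∀ t ∈ Ici a, HasDerivAt (fun s => w s * Complex.exp (-L s)) 0 t := fun t ht =>
    ((hw t ht).mul (hL t ht).neg.cexp).congr_deriv (by field_simp [hw0 t ht]; ring)
  refine ⟨L, fun t ht => ⟨hL t ht, ?_⟩⟩
  have h := eq_of_hasDerivAt_zero_Ici hconst ht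
  simp only [L, intervalIntegral.integral_same, add_zero, Complex.exp_neg,
    Complex.exp_log (hw0 a self_mem_Ici), mul_inv_cancel₀ (hw0 a self_mem_Ici)] at h
  exact ((mul_inv_eq_one₀ (Complex.exp_ne_zero _)).mp h).symm

theorem exp_eq_mul_exp_integral {r k : ℝ → ℝ} {a t : ℝ} (hk : ContinuousOn k (Ici a))
    (hr : ∀ x ∈ Ici a, HasDerivAt r (k x) x) (ht : t ∈ Ici a) :
    exp (r t) = exp (r a) * exp (∫ s in a..t, k s) := by
  have hsub : uIcc a t ⊆ Ici a := by
    rw [uIcc_of_le ht]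
    exact Icc_subset_Ici_self
  rw [integral_eq_sub_of_hasDerivAt (fun x hx => hr x (hsub hx))
    (hk.mono hsub).intervalIntegrable, ← exp_add, add_sub_cancel]

/-- The logarithmic derivative of `w = e^z` when `w' = i(λw - β Im w)`. -/
theorem I_mul_sub_im_div_cexp (lam β : ℝ) (z : ℂ) :
    Complex.I * (lam * Complex.exp z - β * (Complex.exp z).im) / Complex.exp z =
      ⟨-(β * sin z.im ^ 2), lam - 1 / 2 * β * sin (2 * z.im)⟩ := by
  rw [div_eq_iff (Complex.exp_ne_zero z)]
  apply Complex.ext <;>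
    simp only [Complex.mul_re, Complex.mul_im, Complex.I_re, Complex.I_im, Complex.sub_re,
      Complex.sub_im, Complex.ofReal_re, Complex.ofReal_im, Complex.exp_re, Complex.exp_im,
      sin_two_mul]
  · ring
  · linear_combination (β * exp z.re * sin z.im) * sin_sq_add_cos_sq z.im

def phasor (lam : ℝ) (u u' : ℝ → ℝ) (t : ℝ) : ℂ := lam * u t - u' t * Complex.I

section DampedOscillator

variable {lam : ℝ} {b u u' u'' : ℝ → ℝ}

@[simp] theorem phasor_re (t : ℝ) : (phasor lam u u' t).re = lam * u t := by simp [phasor]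

@[simp] theorem phasor_im (t : ℝ) : (phasor lam u u' t).im = -u' t := by simp [phasor]

theorem sq_norm_phasor (t : ℝ) : ‖phasor lam u u' t‖ ^ 2 = u' t ^ 2 + lam ^ 2 * u t ^ 2 := by
  rw [Complex.sq_norm, Complex.normSq_apply, phasor_re, phasor_im]
  ring

theorem hasDerivAt_phasor {t : ℝ} (hu : HasDerivAt u (u' t) t) (hu' : HasDerivAt u' (u'' t) t)
    (heq : u'' t + b t * u' t + lam ^ 2 * u t = 0) :
    HasDerivAt (phasor lam u u') (Complex.I * (lam * phasor lam u u' t + b t * u' t)) t := by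
  have heqC : (u'' t : ℂ) + b t * u' t + lam ^ 2 * u t = 0 := by exact_mod_cast heq
  refine ((hu.ofReal_comp.const_mul (lam : ℂ)).sub
    (hu'.ofReal_comp.mul_const Complex.I)).congr_deriv ?_
  simp only [phasor]
  linear_combination (-Complex.I) * heqC + (lam * u' t : ℂ) * Complex.I_sq

theorem hasDerivAt_energy {t : ℝ} (hu : HasDerivAt u (u' t) t) (hu' : HasDerivAt u' (u'' t) t)
    (heq : u'' t + b t * u' t + lam ^ 2 * u t = 0) :
    HasDerivAt (fun s => u' s ^ 2 + lam ^ 2 * u s ^ 2) (-2 * b t * u' t ^ 2) t :=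
  ((hu'.pow 2).add ((hu.pow 2).const_mul (lam ^ 2))).congr_deriv
    (by linear_combination (2 * u' t) * heq)

variable {t0 : ℝ}

theorem energy_pos (hlam : 0 < lam) (hb : ContinuousOn b (Ici t0))
    (hud : ∀ t ∈ Ici t0, HasDerivAt u (u' t) t)
    (hu'd : ∀ t ∈ Ici t0, HasDerivAt u' (u'' t) t)
    (heq : ∀ t ∈ Ici t0, u'' t + b t * u' t + lam ^ 2 * u t = 0)
    (hinit : 0 < u t0 ^ 2 + u' t0 ^ 2) {t : ℝ} (ht : t ∈ Ici t0) :
    0 < u' t ^ 2 + lam ^ 2 * u t ^ 2 := by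
  refine pos_of_neg_mul_le_deriv (f := fun s => u' s ^ 2 + lam ^ 2 * u s ^ 2)
    (k := fun s => 2 * |b s|) (continuousOn_const.mul hb.abs)
    (fun s hs => hasDerivAt_energy (hud s hs) (hu'd s hs) (heq s hs)) (fun s _ => ?_) ?_ ht
  · nlinarith [le_abs_self (b s), abs_nonneg (b s), sq_nonneg (u s), sq_nonneg (u' s),
      mul_nonneg (abs_nonneg (b s)) (mul_nonneg (sq_nonneg lam) (sq_nonneg (u s)))]
  · nlinarith [mul_pos hlam hlam, sq_nonneg (u t0), sq_nonneg (u' t0),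
      mul_nonneg (mul_pos hlam hlam).le (sq_nonneg (u t0))]

theorem exists_polar_form_phasor (hlam : 0 < lam) (hb : ContinuousOn b (Ici t0))
    (hud : ∀ t ∈ Ici t0, HasDerivAt u (u' t) t)
    (hu'd : ∀ t ∈ Ici t0, HasDerivAt u' (u'' t) t)
    (heq : ∀ t ∈ Ici t0, u'' t + b t * u' t + lam ^ 2 * u t = 0)
    (hinit : 0 < u t0 ^ 2 + u' t0 ^ 2) :
    ∃ r θ : ℝ → ℝ, ∀ t ∈ Ici t0,
      phasor lam u u' t = Complex.exp (r t + θ t * Complex.I) ∧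
      HasDerivAt r (-(b t * sin (θ t) ^ 2)) t ∧
      HasDerivAt θ (lam - 1 / 2 * b t * sin (2 * θ t)) t := by
  have hw : ∀ t ∈ Ici t0, HasDerivAt (phasor lam u u')
      (Complex.I * (lam * phasor lam u u' t + b t * u' t)) t := fun t ht =>
    hasDerivAt_phasor (hud t ht) (hu'd t ht) (heq t ht)
  have hw0 : ∀ t ∈ Ici t0, phasor lam u u' t ≠ 0 := fun t ht h0 => by
    simpa [← sq_norm_phasor, h0] using energy_pos hlam hb hud hu'd heq hinit ht
  have hw'c :
      ContinuousOn (fun t => Complex.I * (lam * phasor lam u u' t + b t * u' t)) (Ici t0) := by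
    have hwc : ContinuousOn (phasor lam u u') (Ici t0) := fun t ht =>
      (hw t ht).continuousAt.continuousWithinAt
    have hu'c : ContinuousOn u' (Ici t0) := fun t ht =>
      (hu'd t ht).continuousAt.continuousWithinAt
    fun_prop
  obtain ⟨L, hL⟩ := exists_hasDerivAt_cexp_eq hw hw0 hw'c
  refine ⟨fun t => (L t).re, fun t => (L t).im, fun t ht => ?_⟩
  obtain ⟨hLd, hLw⟩ := hL t ht
  have hq : Complex.I * (lam * phasor lam u u' t + b t * u' t) / phasor lam u u' t =
      ⟨-(b t * sin (L t).im ^ 2), lam - 1 / 2 * b t * sin (2 * (L t).im)⟩ := by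
    rw [← I_mul_sub_im_div_cexp lam (b t) (L t), hLw, phasor_im]
    push_cast
    ring
  rw [hq] at hLd
  refine ⟨by rw [Complex.re_add_im, hLw], ?_, ?_⟩
  · exact Complex.reCLM.hasFDerivAt.comp_hasDerivAt t hLd
  · exact Complex.imCLM.hasFDerivAt.comp_hasDerivAt t hLd

theorem polar_of_phasor_eq_cexp (hlam : lam ≠ 0) {t r θ : ℝ}
    (h : phasor lam u u' t = Complex.exp (r + θ * Complex.I)) :
    u t = 1 / lam * exp r * cos θ ∧ u' t = -exp r * sin θ := by
  have hre := congrArg Complex.re h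
  have him := congrArg Complex.im h
  simp only [phasor_re, phasor_im, Complex.exp_re, Complex.exp_im, Complex.add_re,
    Complex.add_im, Complex.ofReal_re, Complex.ofReal_im, Complex.mul_I_re, Complex.mul_I_im,
    neg_zero, add_zero, zero_add] at hre him
  constructor
  · field_simp
    linarith
  · linarith

theorem energy_eq_of_phasor_eq_cexp {t r θ : ℝ}
    (h : phasor lam u u' t = Complex.exp (r + θ * Complex.I)) :
    u' t ^ 2 + lam ^ 2 * u t ^ 2 = exp r ^ 2 := by
  rw [← sq_norm_phasor, h, Complex.norm_exp]
  simp

end DampedOscillator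

theorem polar_representation_general
    (t0 lam : ℝ) (hlam : 0 < lam)
    (b : ℝ → ℝ) (hb : ContinuousOn b (Ici t0))
    (u u' u'' : ℝ → ℝ)
    (hud : ∀ t ∈ Ici t0, HasDerivAt u (u' t) t)
    (hu'd : ∀ t ∈ Ici t0, HasDerivAt u' (u'' t) t)
    (heq : ∀ t ∈ Ici t0, u'' t + b t * u' t + lam ^ 2 * u t = 0)
    (hinit : 0 < u t0 ^ 2 + u' t0 ^ 2) :
    ∃ ρ θ ρ' θ' : ℝ → ℝ,
      (∀ t ∈ Ici t0, HasDerivAt ρ (ρ' t) t) ∧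
      (∀ t ∈ Ici t0, HasDerivAt θ (θ' t) t) ∧
      ContinuousOn ρ' (Ici t0) ∧ ContinuousOn θ' (Ici t0) ∧
      (∀ t ∈ Ici t0, 0 < ρ t) ∧
      (∀ t ∈ Ici t0, u t = (1 / lam) * ρ t * Real.cos (θ t) ∧
        u' t = - ρ t * Real.sin (θ t)) ∧
      (∀ t ∈ Ici t0, ρ' t = - ρ t * b t * Real.sin (θ t) ^ 2 ∧
        θ' t = lam - (1 / 2) * b t * Real.sin (2 * θ t)) ∧
      (∀ t ∈ Ici t0, |θ' t - lam| ≤ (1 / 2) * |b t|) ∧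
      (∀ t ∈ Ici t0,
        u' t ^ 2 + lam ^ 2 * u t ^ 2 =
          (u' t0 ^ 2 + lam ^ 2 * u t0 ^ 2) *
            Real.exp (-2 * ∫ s in t0..t, b s * Real.sin (θ s) ^ 2)) := by
  obtain ⟨r, θ, hpolar⟩ := exists_polar_form_phasor hlam hb hud hu'd heq hinit
  have hr : ∀ t ∈ Ici t0, HasDerivAt r (-(b t * sin (θ t) ^ 2)) t :=
    fun t ht => (hpolar t ht).2.1
  have hθ : ∀ t ∈ Ici t0, HasDerivAt θ (lam - 1 / 2 * b t * sin (2 * θ t)) t :=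
    fun t ht => (hpolar t ht).2.2
  have hrc : ContinuousOn r (Ici t0) := fun t ht => (hr t ht).continuousAt.continuousWithinAt
  have hθc : ContinuousOn θ (Ici t0) := fun t ht => (hθ t ht).continuousAt.continuousWithinAt
  refine ⟨fun t => exp (r t), θ, fun t => -exp (r t) * b t * sin (θ t) ^ 2,
    fun t => lam - 1 / 2 * b t * sin (2 * θ t), fun t ht => (hr t ht).exp.congr_deriv (by ring),
    hθ, by fun_prop, by fun_prop, fun t _ => exp_pos _,
    fun t ht => polar_of_phasor_eq_cexp hlam.ne' (hpolar t ht).1, fun t _ => ⟨rfl, rfl⟩,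
    fun t _ => ?_, fun t ht => ?_⟩
  · rw [sub_sub_cancel_left, abs_neg, abs_mul, abs_mul, abs_of_pos one_half_pos]
    exact mul_le_of_le_one_right (by positivity) (abs_sin_le_one _)
  · have hk : ContinuousOn (fun s => -(b s * sin (θ s) ^ 2)) (Ici t0) := by fun_prop
    rw [energy_eq_of_phasor_eq_cexp (hpolar t ht).1,
      energy_eq_of_phasor_eq_cexp (hpolar t0 self_mem_Ici).1, exp_eq_mul_exp_integral hk hr ht,
      intervalIntegral.integral_neg, mul_pow, ← exp_nat_mul, ← exp_nat_mul]
    ring_nf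

theorem polar_representation
    (t0 lam : ℝ) (ht0 : 0 < t0) (hlam : 0 < lam)
    (b : ℝ → ℝ) (hb : ContinuousOn b (Ici t0))
    (u u' u'' : ℝ → ℝ)
    (hud : ∀ t ∈ Ici t0, HasDerivAt u (u' t) t)
    (hu'd : ∀ t ∈ Ici t0, HasDerivAt u' (u'' t) t)
    (hu''c : ContinuousOn u'' (Ici t0))
    (heq : ∀ t ∈ Ici t0, u'' t + b t * u' t + lam ^ 2 * u t = 0)
    (hinit : 0 < u t0 ^ 2 + u' t0 ^ 2) :
    ∃ ρ θ ρ' θ' : ℝ → ℝ,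
      (∀ t ∈ Ici t0, HasDerivAt ρ (ρ' t) t) ∧
      (∀ t ∈ Ici t0, HasDerivAt θ (θ' t) t) ∧
      ContinuousOn ρ' (Ici t0) ∧ ContinuousOn θ' (Ici t0) ∧
      (∀ t ∈ Ici t0, 0 < ρ t) ∧
      (∀ t ∈ Ici t0, u t = (1 / lam) * ρ t * Real.cos (θ t) ∧
        u' t = - ρ t * Real.sin (θ t)) ∧
      (∀ t ∈ Ici t0, ρ' t = - ρ t * b t * Real.sin (θ t) ^ 2 ∧
        θ' t = lam - (1 / 2) * b t * Real.sin (2 * θ t)) ∧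
      (∀ t ∈ Ici t0, |θ' t - lam| ≤ (1 / 2) * |b t|) ∧
      (∀ t ∈ Ici t0,
        u' t ^ 2 + lam ^ 2 * u t ^ 2 =
          (u' t0 ^ 2 + lam ^ 2 * u t0 ^ 2) *
            Real.exp (-2 * ∫ s in t0..t, b s * Real.sin (θ s) ^ 2)) :=
  polar_representation_general t0 lam hlam b hb u u' u'' hud hu'd heq hinit
end

section
/- Let ε and λ be real numbers, and define c(t) := 1 − 8ε·sin(2λt) − 16ε²·sin⁴(λt) and w(t) := sin(λt)·exp(2ελt − ε·sin(2λt)) for t ∈ ℝ. Then w is twice differentiable and satisfies w''(t) + λ²·c(t)·w(t) = 0 for every t ∈ ℝ. -/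
/-!
Write `w = sin(λt) · e^φ` with phase `φ(t) = 2ελt − ε sin(2λt)`. Since
`φ' = 2ελ(1 − cos 2λt) = 4ελ sin²(λt)`, each differentiation of `A · e^φ` gives `(A' + A φ') e^φ`
with `A` a polynomial in `sin(λt)`, `cos(λt)`; two steps give
`w'' = λ²(−s + 16ε s² k + 16ε² s⁵) e^φ` with `s = sin λt`, `k = cos λt`, and
`sin 2λt = 2sk` turns `−λ² c(t) w` into exactly this expression.
-/

open Real

namespace ResonantGrowth

theorem hasDerivAt_mul_exp {u φ : ℝ → ℝ} {u' φ' t : ℝ} (hu : HasDerivAt u u' t)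
    (hφ : HasDerivAt φ φ' t) :
    HasDerivAt (fun x => u x * exp (φ x)) ((u' + u t * φ') * exp (φ t)) t :=
  (hu.mul hφ.exp).congr_deriv (by ring)

variable (ε lam : ℝ)

noncomputable def phase (t : ℝ) : ℝ := 2 * ε * lam * t - ε * sin (2 * lam * t)

lemma hasDerivAt_sin_const_mul (t : ℝ) :
    HasDerivAt (fun x => sin (lam * x)) (lam * cos (lam * t)) t := by
  convert (hasDerivAt_const_mul lam).sin using 1
  ring

lemma hasDerivAt_cos_const_mul (t : ℝ) :
    HasDerivAt (fun x => cos (lam * x)) (-(lam * sin (lam * t))) t := by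
  convert (hasDerivAt_const_mul lam).cos using 1
  ring

lemma hasDerivAt_phase (t : ℝ) :
    HasDerivAt (phase ε lam) (4 * ε * lam * sin (lam * t) ^ 2) t := by
  have hsin2 := (hasDerivAt_const_mul (2 * lam)).sin (x := t)
  refine ((hasDerivAt_const_mul (2 * ε * lam)).sub (hsin2.const_mul ε)).congr_deriv ?_
  rw [mul_assoc 2 lam t, cos_two_mul, cos_sq']
  ring

lemma hasDerivAt_sin_mul_exp_phase (t : ℝ) :
    HasDerivAt (fun x => sin (lam * x) * exp (phase ε lam x))
      ((lam * cos (lam * t) + 4 * ε * lam * sin (lam * t) ^ 3) * exp (phase ε lam t)) t := by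
  convert hasDerivAt_mul_exp (hasDerivAt_sin_const_mul lam t) (hasDerivAt_phase ε lam t) using 2
  ring

lemma hasDerivAt_deriv_sin_mul_exp_phase (t : ℝ) :
    HasDerivAt
      (fun x => (lam * cos (lam * x) + 4 * ε * lam * sin (lam * x) ^ 3) * exp (phase ε lam x))
      (lam ^ 2 * (-sin (lam * t) + 16 * ε * sin (lam * t) ^ 2 * cos (lam * t)
        + 16 * ε ^ 2 * sin (lam * t) ^ 5) * exp (phase ε lam t)) t := by
  have hA : HasDerivAt (fun x => lam * cos (lam * x) + 4 * ε * lam * sin (lam * x) ^ 3)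
      (lam * -(lam * sin (lam * t)) + 4 * ε * lam * (3 * sin (lam * t) ^ 2 * (lam * cos (lam * t))))
      t :=
    ((hasDerivAt_cos_const_mul lam t).const_mul lam).add
      (((hasDerivAt_sin_const_mul lam t).pow 3).const_mul (4 * ε * lam))
  convert hasDerivAt_mul_exp hA (hasDerivAt_phase ε lam t) using 2
  ring

end ResonantGrowth

open ResonantGrowth in
theorem resonant_growth_example (ε lam : ℝ) (c w : ℝ → ℝ)
    (hc : ∀ t, c t = 1 - 8 * ε * Real.sin (2 * lam * t)
        - 16 * ε ^ 2 * Real.sin (lam * t) ^ 4)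
    (hw : ∀ t, w t = Real.sin (lam * t) *
        Real.exp (2 * ε * lam * t - ε * Real.sin (2 * lam * t))) :
    ∃ w' w'' : ℝ → ℝ,
      (∀ t, HasDerivAt w (w' t) t) ∧
      (∀ t, HasDerivAt w' (w'' t) t) ∧
      (∀ t, w'' t + lam ^ 2 * c t * w t = 0) := by
  have hw_eq : w = fun t => sin (lam * t) * exp (phase ε lam t) := funext hw
  subst hw_eq
  refine ⟨_, _, hasDerivAt_sin_mul_exp_phase ε lam,
    hasDerivAt_deriv_sin_mul_exp_phase ε lam, fun t => ?_⟩
  rw [hc, mul_assoc 2 lam t, sin_two_mul]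
  ring
end
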